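/- arXiv:1105.1272 — 8 statements merged into one kernel-verified Lean document; each statement's English description precedes it below -/
import Mathlib

section
/- Let μ be a Borel probability measure on ℝ with compact support which is not a point mass, let α ∈ (0,1) and c ∈ ℝ, and suppose there exists w ∈ ℂ ∖ ℝ with w·G_μ(w + c) = 1 − α. Then there exists w₀ ∈ ℂ with Im(w₀) > 0 such that {w ∈ ℂ ∖ ℝ : w·G_μ(w + c) = 1 − α} = {w₀, conj(w₀)}; moreover −∫_ℝ (w₀ + c − x)⁻² dμ(x) + (1 − α)/w₀² ≠ 0. -/
/-!
For `w` in the upper half-plane, `w * G_μ(w + c) = 1 - α` says exactly that `z = w + c` is a fixed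
point of `k z = (1 - α) / G_μ(z) + c`, a holomorphic self-map of the upper half-plane since
`Im G_μ < 0` there. Conjugated by a Cayley transform centred at one fixed point, `k` becomes a
self-map of the unit disc fixing `0`, so by the equality case of the Schwarz lemma a second fixed
point, or derivative `1` at the fixed point, forces `k = id`. This is impossible because
`(z - c) G_μ(z) → 1 ≠ 1 - α` as `z → c + i∞`; and the non-degeneracy condition of the theorem is
`k'(w₀ + c) ≠ 1`. Lower half-plane solutions are the conjugates of upper ones.
-/

open MeasureTheory Complex

/-- The Cauchy (Stieltjes) transform of a measure on `ℝ`. -/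
noncomputable def cauchyT (μ : Measure ℝ) (w : ℂ) : ℂ := ∫ t : ℝ, (w - (t : ℂ))⁻¹ ∂μ

open Metric Set Filter Topology Function ComplexConjugate

local notation "ℍₒ" => UpperHalfPlane.upperHalfPlaneSet

lemma eq_insert_conj_of_forall_im_pos_eq {S : Set ℂ} (him : ∀ w ∈ S, w.im ≠ 0)
    (hconj : ∀ w ∈ S, conj w ∈ S) {w₀ : ℂ} (hw₀ : w₀ ∈ S)
    (huniq : ∀ w ∈ S, 0 < w.im → w = w₀) : S = {w₀, conj w₀} := by
  ext w
  refine ⟨fun hw => ?_, ?_⟩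
  · rcases (him w hw).lt_or_gt with h | h
    · right
      rw [← huniq _ (hconj w hw) (by simpa using h), conj_conj]
      rfl
    · exact .inl (huniq w hw h)
  · rintro (rfl | rfl)
    exacts [hw₀, hconj _ hw₀]

section Cayley

variable {z₀ z u : ℂ}

noncomputable def cayley (z₀ z : ℂ) : ℂ := (z - z₀) / (z - conj z₀)

noncomputable def cayleyInv (z₀ u : ℂ) : ℂ := (z₀ - conj z₀ * u) / (1 - u)

lemma sub_conj_ne_zero_of_im_pos (hz₀ : 0 < z₀.im) (hz : 0 < z.im) : z - conj z₀ ≠ 0 := by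
  intro h
  have := congrArg im h
  simp only [sub_im, conj_im, sub_neg_eq_add, zero_im] at this
  linarith

lemma cayley_self : cayley z₀ z₀ = 0 := by simp [cayley]

lemma cayleyInv_zero : cayleyInv z₀ 0 = z₀ := by simp [cayleyInv]

lemma cayley_mem_ball (hz₀ : 0 < z₀.im) (hz : 0 < z.im) : cayley z₀ z ∈ ball (0 : ℂ) 1 := by
  have hne := sub_conj_ne_zero_of_im_pos hz₀ hz
  rw [mem_ball_zero_iff, cayley, norm_div, div_lt_one (norm_pos_iff.2 hne), ← sq_lt_sq₀
    (norm_nonneg _) (norm_nonneg _), ← normSq_eq_norm_sq, ← normSq_eq_norm_sq]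
  simp only [normSq_apply, sub_re, sub_im, conj_re, conj_im]
  nlinarith [mul_pos hz₀ hz]

lemma cayleyInv_im_pos (hz₀ : 0 < z₀.im) (hu : u ∈ ball (0 : ℂ) 1) :
    0 < (cayleyInv z₀ u).im := by
  rw [mem_ball_zero_iff] at hu
  have hu1 : 1 - u ≠ 0 := fun h => by simp [← sub_eq_zero.1 h] at hu
  have hnormSq : normSq u < 1 := by
    rw [normSq_eq_norm_sq]; nlinarith [norm_nonneg u]
  have hnum : (z₀ - conj z₀ * u).im * (1 - u).re - (z₀ - conj z₀ * u).re * (1 - u).im =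
      z₀.im * (1 - normSq u) := by
    simp only [mul_im, mul_re, sub_im, sub_re, conj_re, conj_im, one_re, one_im, normSq_apply]
    ring
  rw [cayleyInv, div_im, div_sub_div_same, hnum]
  have := normSq_pos.2 hu1
  have : 0 < 1 - normSq u := by linarith
  positivity

lemma cayleyInv_cayley (hz₀ : 0 < z₀.im) (hz : 0 < z.im) : cayleyInv z₀ (cayley z₀ z) = z := by
  have hne := sub_conj_ne_zero_of_im_pos hz₀ hz
  have hne₀ := sub_conj_ne_zero_of_im_pos hz₀ hz₀
  rw [cayleyInv, cayley, div_eq_iff]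
  · field_simp
    ring
  · rw [one_sub_div hne]
    exact div_ne_zero (by simpa using hne₀) hne

lemma cayley_ne_zero (hz₀ : 0 < z₀.im) (hz : 0 < z.im) (hne : z ≠ z₀) : cayley z₀ z ≠ 0 :=
  div_ne_zero (sub_ne_zero.2 hne) (sub_conj_ne_zero_of_im_pos hz₀ hz)

lemma differentiableAt_cayley (hz₀ : 0 < z₀.im) (hz : 0 < z.im) :
    DifferentiableAt ℂ (cayley z₀) z :=
  (differentiableAt_id.sub_const z₀).div (differentiableAt_id.sub_const _)
    (sub_conj_ne_zero_of_im_pos hz₀ hz)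

lemma differentiableAt_cayleyInv (hu : u ≠ 1) : DifferentiableAt ℂ (cayleyInv z₀) u :=
  ((differentiableAt_id.const_mul _).const_sub _).div (differentiableAt_id.const_sub _)
    (sub_ne_zero.2 hu.symm)

lemma hasDerivAt_cayley_self (hz₀ : 0 < z₀.im) :
    HasDerivAt (cayley z₀) (z₀ - conj z₀)⁻¹ z₀ := by
  have hne := sub_conj_ne_zero_of_im_pos hz₀ hz₀
  refine (((hasDerivAt_id z₀).sub_const z₀).div
    ((hasDerivAt_id z₀).sub_const (conj z₀)) hne).congr_deriv ?_
  simp only [id, sub_self, mul_one, sub_zero]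
  field_simp

lemma hasDerivAt_cayleyInv_zero : HasDerivAt (cayleyInv z₀) (z₀ - conj z₀) 0 := by
  refine ((((hasDerivAt_id (0 : ℂ)).const_mul (conj z₀)).const_sub z₀).div
    ((hasDerivAt_id (0 : ℂ)).const_sub 1) (by simp)).congr_deriv ?_
  simp only [id]
  ring

end Cayley

section SchwarzPick

variable {g : ℂ → ℂ} {z₀ : ℂ}

lemma eqOn_id_of_dslope_cayley_comp_eq_one (hg : DifferentiableOn ℂ g ℍₒ)
    (hmaps : MapsTo g ℍₒ ℍₒ) (hz₀ : 0 < z₀.im) (hfix : IsFixedPt g z₀) {u : ℂ}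
    (hu : u ∈ ball (0 : ℂ) 1) (hslope : dslope (cayley z₀ ∘ g ∘ cayleyInv z₀) 0 u = 1) :
    EqOn g id ℍₒ := by
  set f := cayley z₀ ∘ g ∘ cayleyInv z₀
  have hf0 : f 0 = 0 := by simp only [f, comp_apply, cayleyInv_zero, hfix.eq, cayley_self]
  have hfmaps : MapsTo f (ball 0 1) (ball 0 1) := fun v hv =>
    cayley_mem_ball hz₀ (hmaps (cayleyInv_im_pos hz₀ hv))
  have hfd : DifferentiableOn ℂ f (ball 0 1) := fun v hv =>
    have hv1 : v ≠ 1 := by rintro rfl; simp at hv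
    have hψv := cayleyInv_im_pos hz₀ hv
    ((differentiableAt_cayley hz₀ (hmaps hψv)).comp v
      ((hg.differentiableAt (UpperHalfPlane.isOpen_upperHalfPlaneSet.mem_nhds hψv)).comp v
        (differentiableAt_cayleyInv hv1))).differentiableWithinAt
  have hfmaps' : MapsTo f (ball 0 1) (closedBall (f 0) 1) := by
    rw [hf0]; exact hfmaps.mono_right ball_subset_closedBall
  have hf_id : EqOn f id (ball 0 1) := fun v hv => by
    have := Complex.affine_of_mapsTo_ball_of_norm_dslope_eq_div (R₂ := 1) hfd hfmaps' hu
      (by simp [hslope]) hv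
    simpa [hf0, hslope] using this
  intro z hz
  calc g z = cayleyInv z₀ (f (cayley z₀ z)) := by
        simp only [f, comp_apply, cayleyInv_cayley hz₀ hz, cayleyInv_cayley hz₀ (hmaps hz)]
    _ = z := by rw [hf_id (cayley_mem_ball hz₀ hz), id, cayleyInv_cayley hz₀ hz]

theorem eqOn_id_of_isFixedPt_of_isFixedPt (hg : DifferentiableOn ℂ g ℍₒ)
    (hmaps : MapsTo g ℍₒ ℍₒ) (hz₀ : 0 < z₀.im) (hfix₀ : IsFixedPt g z₀) {z : ℂ}
    (hz : 0 < z.im) (hfix : IsFixedPt g z) (hne : z ≠ z₀) : EqOn g id ℍₒ := by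
  refine eqOn_id_of_dslope_cayley_comp_eq_one hg hmaps hz₀ hfix₀ (cayley_mem_ball hz₀ hz) ?_
  rw [dslope_of_ne _ (cayley_ne_zero hz₀ hz hne), slope_def_field]
  simp only [comp_apply, cayleyInv_cayley hz₀ hz, hfix.eq, cayleyInv_zero, hfix₀.eq, cayley_self]
  exact div_self (by simpa using cayley_ne_zero hz₀ hz hne)

theorem eqOn_id_of_isFixedPt_of_hasDerivAt_one (hg : DifferentiableOn ℂ g ℍₒ)
    (hmaps : MapsTo g ℍₒ ℍₒ) (hz₀ : 0 < z₀.im) (hfix₀ : IsFixedPt g z₀)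
    (hderiv : HasDerivAt g 1 z₀) : EqOn g id ℍₒ := by
  refine eqOn_id_of_dslope_cayley_comp_eq_one hg hmaps hz₀ hfix₀ (mem_ball_self one_pos) ?_
  have hf := (hasDerivAt_cayley_self hz₀).comp_of_eq 0
    (hderiv.comp_of_eq 0 hasDerivAt_cayleyInv_zero cayleyInv_zero.symm)
    (by rw [comp_apply, cayleyInv_zero, hfix₀.eq])
  rw [dslope_same, hf.deriv, one_mul]
  exact inv_mul_cancel₀ (sub_conj_ne_zero_of_im_pos hz₀ hz₀)

end SchwarzPick

section CauchyTransform

variable (μ : Measure ℝ) {z : ℂ}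

lemma abs_im_le_norm_sub_ofReal (z : ℂ) (t : ℝ) : |z.im| ≤ ‖z - t‖ := by
  simpa using abs_im_le_norm (z - t)

lemma sub_ofReal_ne_zero (hz : z.im ≠ 0) (t : ℝ) : z - t ≠ 0 :=
  fun h => hz (by simpa using congrArg im h)

lemma integrable_inv_sub_ofReal [IsFiniteMeasure μ] (hz : z.im ≠ 0) :
    Integrable (fun t : ℝ => (z - t)⁻¹) μ := by
  refine (integrable_const |z.im|⁻¹).mono' (by fun_prop) (ae_of_all _ fun t => ?_)
  rw [norm_inv]
  exact inv_anti₀ (abs_pos.2 hz) (abs_im_le_norm_sub_ofReal z t)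

lemma im_cauchyT_neg [IsFiniteMeasure μ] [NeZero μ] (hz : 0 < z.im) :
    (cauchyT μ z).im < 0 := by
  have hint := integrable_inv_sub_ofReal μ hz.ne'
  have him : ∀ t : ℝ, 0 < -((z - t)⁻¹).im := fun t => by
    rw [inv_im, sub_im, ofReal_im, sub_zero, neg_div, neg_neg]
    exact div_pos hz (normSq_pos.2 (sub_ofReal_ne_zero hz.ne' t))
  have hpos : 0 < ∫ t : ℝ, -((z - t)⁻¹).im ∂μ := by
    rw [integral_pos_iff_support_of_nonneg (fun t => (him t).le) hint.im.neg,
      Function.support_eq_univ fun t => (him t).ne']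
    simp [NeZero.ne μ]
  rw [← neg_pos, cauchyT, ← RCLike.im_to_complex, ← integral_im hint, ← integral_neg]
  simpa using hpos

lemma cauchyT_ne_zero [IsFiniteMeasure μ] [NeZero μ] (hz : 0 < z.im) : cauchyT μ z ≠ 0 :=
  fun h => by simpa [h] using im_cauchyT_neg μ hz

lemma cauchyT_conj (z : ℂ) : cauchyT μ (conj z) = conj (cauchyT μ z) := by
  simp only [cauchyT, ← integral_conj, map_inv₀, map_sub, conj_ofReal]

lemma conj_mul_cauchyT_add_ofReal (w : ℂ) (c : ℝ) :
    conj w * cauchyT μ (conj w + c) = conj (w * cauchyT μ (w + c)) := by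
  rw [map_mul, ← cauchyT_conj, map_add, conj_ofReal]

lemma hasDerivAt_cauchyT [IsFiniteMeasure μ] (hz : z.im ≠ 0) :
    HasDerivAt (cauchyT μ) (-∫ t : ℝ, ((z - t) ^ 2)⁻¹ ∂μ) z := by
  set ε := |z.im| / 2 with hε_def
  have hε : 0 < ε := by positivity
  have him : ∀ w ∈ ball z ε, ε ≤ |w.im| := fun w hw => by
    have h1 := (abs_im_le_norm (w - z)).trans_lt (mem_ball_iff_norm.1 hw)
    rw [sub_im] at h1
    have h2 := abs_sub_abs_le_abs_sub z.im w.im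
    rw [abs_sub_comm] at h2
    linarith
  rw [← integral_neg]
  refine (hasDerivAt_integral_of_dominated_loc_of_deriv_le (F := fun (w : ℂ) (t : ℝ) => (w - t)⁻¹)
    (F' := fun (w : ℂ) (t : ℝ) => -((w - t) ^ 2)⁻¹) (bound := fun _ => (ε ^ 2)⁻¹)
    (ball_mem_nhds z hε) (Eventually.of_forall fun w => by fun_prop)
    (integrable_inv_sub_ofReal μ hz) (by fun_prop) (ae_of_all _ fun t w hw => ?_)
    (integrable_const _) (ae_of_all _ fun t w hw => ?_)).2
  · rw [norm_neg, norm_inv, norm_pow]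
    exact inv_anti₀ (by positivity) (pow_le_pow_left₀ hε.le
      ((him w hw).trans (abs_im_le_norm_sub_ofReal w t)) 2)
  · have hne : w - t ≠ 0 := sub_ofReal_ne_zero (abs_pos.1 (hε.trans_le (him w hw))) t
    exact (((hasDerivAt_id w).sub_const (t : ℂ)).inv hne).congr_deriv (by simp [neg_div])

lemma tendsto_mul_cauchyT_atTop [IsFiniteMeasure μ] (c : ℝ) :
    Tendsto (fun y : ℝ => (y * I) * cauchyT μ (y * I + c)) atTop (𝓝 (μ.real univ)) := by
  have hlim : ∫ _ : ℝ, (1 : ℂ) ∂μ = μ.real univ := by simp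
  rw [← hlim]
  simp_rw [cauchyT, ← integral_const_mul]
  refine tendsto_integral_filter_of_dominated_convergence (fun _ => 1)
    (Eventually.of_forall fun y => by fun_prop) ?_ (integrable_const 1) (ae_of_all _ fun t => ?_)
  · filter_upwards [eventually_gt_atTop 0] with y hy
    refine ae_of_all _ fun t => ?_
    rw [norm_mul, norm_inv, ← div_eq_mul_inv]
    refine div_le_one_of_le₀ ?_ (norm_nonneg _)
    simpa [abs_of_pos hy] using abs_im_le_norm_sub_ofReal (y * I + c) t
  · have hinv : Tendsto (fun y : ℝ => ((y⁻¹ : ℝ) : ℂ)) atTop (𝓝 0) := by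
      rw [← ofReal_zero]
      exact (continuous_ofReal.tendsto 0).comp tendsto_inv_atTop_zero
    have := ((hinv.const_mul ((c - t) * -I)).const_add 1).inv₀ (by simp)
    simp only [mul_zero, add_zero, inv_one] at this
    refine this.congr' ?_
    filter_upwards [eventually_gt_atTop 0] with y hy
    have hy' : (y : ℂ) ≠ 0 := by exact_mod_cast hy.ne'
    have hden : (y : ℂ) * I + c - t ≠ 0 := sub_ofReal_ne_zero (by simpa using hy.ne') t
    have hfactor : 1 + (c - t) * -I * ((y⁻¹ : ℝ) : ℂ) = -I * (y * I + c - t) / y := by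
      push_cast
      field_simp
      linear_combination (y : ℂ) * I_sq
    rw [hfactor, inv_div, div_eq_iff (mul_ne_zero (by simp) hden)]
    field_simp
    linear_combination I_sq

end CauchyTransform

section ShiftedReciprocalCauchy

noncomputable def shiftedReciprocalCauchy (μ : Measure ℝ) (r c : ℝ) (z : ℂ) : ℂ :=
  r * (cauchyT μ z)⁻¹ + c

variable {μ : Measure ℝ} {r c : ℝ} {z : ℂ}

lemma mapsTo_shiftedReciprocalCauchy [IsFiniteMeasure μ] [NeZero μ] (hr : 0 < r) :
    MapsTo (shiftedReciprocalCauchy μ r c) ℍₒ ℍₒ := fun z hz => by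
  show 0 < (r * (cauchyT μ z)⁻¹ + c).im
  rw [add_im, ofReal_im, add_zero, im_ofReal_mul, inv_im, neg_div]
  exact mul_pos hr (neg_pos.2 (div_neg_of_neg_of_pos (im_cauchyT_neg μ hz)
    (normSq_pos.2 (cauchyT_ne_zero μ hz))))

lemma differentiableOn_shiftedReciprocalCauchy [IsFiniteMeasure μ] [NeZero μ] :
    DifferentiableOn ℂ (shiftedReciprocalCauchy μ r c) ℍₒ := fun _ hz =>
  ((((hasDerivAt_cauchyT μ (ne_of_gt hz)).differentiableAt.inv
    (cauchyT_ne_zero μ hz)).const_mul _).add_const _).differentiableWithinAt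

lemma isFixedPt_shiftedReciprocalCauchy_add_iff [IsFiniteMeasure μ] [NeZero μ] {w : ℂ}
    (hw : 0 < w.im) :
    IsFixedPt (shiftedReciprocalCauchy μ r c) (w + c) ↔ w * cauchyT μ (w + c) = r := by
  have hG : cauchyT μ (w + c) ≠ 0 := cauchyT_ne_zero μ (by simpa using hw)
  rw [IsFixedPt, shiftedReciprocalCauchy, add_left_inj, mul_inv_eq_iff_eq_mul₀ hG, eq_comm]

lemma not_eqOn_id_shiftedReciprocalCauchy [IsProbabilityMeasure μ] (hr : r ≠ 1) :
    ¬ EqOn (shiftedReciprocalCauchy μ r c) id ℍₒ := fun h => by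
  have hconst : ∀ᶠ y : ℝ in atTop, (y * I) * cauchyT μ (y * I + c) = r := by
    filter_upwards [eventually_gt_atTop 0] with y hy
    exact (isFixedPt_shiftedReciprocalCauchy_add_iff (by simpa using hy)).1
      (h (show 0 < (y * I + c).im by simpa using hy))
  have := tendsto_nhds_unique (tendsto_const_nhds.congr' (hconst.mono fun _ => Eq.symm))
    (tendsto_mul_cauchyT_atTop μ c)
  simp only [probReal_univ, ofReal_one, ofReal_eq_one] at this
  exact hr this

lemma hasDerivAt_shiftedReciprocalCauchy_eq_one [IsFiniteMeasure μ] [NeZero μ] {w : ℂ} (hw : 0 < w.im) (hsol : w * cauchyT μ (w + c) = r)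
    (hdeg : -(∫ t : ℝ, ((w + c - t) ^ 2)⁻¹ ∂μ) + r / w ^ 2 = 0) :
    HasDerivAt (shiftedReciprocalCauchy μ r c) 1 (w + c) := by
  have hw0 : w ≠ 0 := by rintro rfl; simp at hw
  have hG := cauchyT_ne_zero μ (z := w + c) (by simpa using hw)
  have hr : (r : ℂ) ≠ 0 := hsol ▸ mul_ne_zero hw0 hG
  have hG' : -(∫ t : ℝ, ((w + c - t) ^ 2)⁻¹ ∂μ) = -(r / w ^ 2) := by linear_combination hdeg
  have hGval : cauchyT μ (w + c) = r / w := by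
    rw [eq_div_iff hw0]; linear_combination hsol
  refine ((((hasDerivAt_cauchyT μ (by simpa using hw.ne')).inv hG).const_mul (r : ℂ)).add_const
    (c : ℂ)).congr_deriv ?_
  rw [hG', hGval]
  field_simp

end ShiftedReciprocalCauchy

theorem stmt1_general (μ : Measure ℝ) [IsProbabilityMeasure μ]
    (α : ℝ) (hα : α ∈ Set.Ioo (0 : ℝ) 1) (c : ℝ)
    (hc : ∃ w : ℂ, w.im ≠ 0 ∧ w * cauchyT μ (w + c) = ((1 - α : ℝ) : ℂ)) :
    ∃ w₀ : ℂ, 0 < w₀.im ∧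
      {w : ℂ | w.im ≠ 0 ∧ w * cauchyT μ (w + c) = ((1 - α : ℝ) : ℂ)}
        = {w₀, (starRingEnd ℂ) w₀} ∧
      -(∫ t : ℝ, ((w₀ + (c : ℂ) - (t : ℂ)) ^ 2)⁻¹ ∂μ) + ((1 - α : ℝ) : ℂ) / w₀ ^ 2 ≠ 0 := by
  obtain ⟨hα0, hα1⟩ := hα
  set k := shiftedReciprocalCauchy μ (1 - α) c
  have hk : DifferentiableOn ℂ k ℍₒ := differentiableOn_shiftedReciprocalCauchy
  have hkH : MapsTo k ℍₒ ℍₒ := mapsTo_shiftedReciprocalCauchy (by linarith)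
  have hk_id : ¬ EqOn k id ℍₒ := not_eqOn_id_shiftedReciprocalCauchy (by linarith)
  have hconj : ∀ w, w * cauchyT μ (w + c) = ((1 - α : ℝ) : ℂ) →
      conj w * cauchyT μ (conj w + c) = ((1 - α : ℝ) : ℂ) := fun w hw => by
    rw [conj_mul_cauchyT_add_ofReal, hw, conj_ofReal]
  obtain ⟨w₀, hw₀, hw₀_sol⟩ : ∃ w₀ : ℂ, 0 < w₀.im ∧
      w₀ * cauchyT μ (w₀ + c) = ((1 - α : ℝ) : ℂ) := by
    obtain ⟨w, hw, hw_sol⟩ := hc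
    rcases hw.lt_or_gt with h | h
    exacts [⟨conj w, by simpa using h, hconj w hw_sol⟩, ⟨w, h, hw_sol⟩]
  have hz₀ : 0 < (w₀ + c).im := by simpa using hw₀
  have hfix₀ : IsFixedPt k (w₀ + c) := (isFixedPt_shiftedReciprocalCauchy_add_iff hw₀).2 hw₀_sol
  refine ⟨w₀, hw₀, ?_, fun hdeg => hk_id ?_⟩
  · refine eq_insert_conj_of_forall_im_pos_eq (fun w hw => hw.1) (fun w hw => ?_)
      ⟨hw₀.ne', hw₀_sol⟩ fun w hw hw_pos => ?_
    · exact ⟨by simpa using hw.1, hconj w hw.2⟩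
    by_contra hne
    exact hk_id (eqOn_id_of_isFixedPt_of_isFixedPt hk hkH hz₀ hfix₀ (by simpa using hw_pos)
      ((isFixedPt_shiftedReciprocalCauchy_add_iff hw_pos).2 hw.2) (by simpa using hne))
  · exact eqOn_id_of_isFixedPt_of_hasDerivAt_one hk hkH hz₀ hfix₀
      (hasDerivAt_shiftedReciprocalCauchy_eq_one hw₀ hw₀_sol hdeg)

theorem stmt1 (μ : Measure ℝ) [IsProbabilityMeasure μ]
    (hcomp : ∃ K : Set ℝ, IsCompact K ∧ μ Kᶜ = 0)
    (hnotpoint : ∀ t : ℝ, μ ≠ Measure.dirac t)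
    (α : ℝ) (hα : α ∈ Set.Ioo (0 : ℝ) 1) (c : ℝ)
    (hc : ∃ w : ℂ, w.im ≠ 0 ∧ w * cauchyT μ (w + c) = ((1 - α : ℝ) : ℂ)) :
    ∃ w₀ : ℂ, 0 < w₀.im ∧
      {w : ℂ | w.im ≠ 0 ∧ w * cauchyT μ (w + c) = ((1 - α : ℝ) : ℂ)}
        = {w₀, (starRingEnd ℂ) w₀} ∧
      -(∫ t : ℝ, ((w₀ + (c : ℂ) - (t : ℂ)) ^ 2)⁻¹ ∂μ) + ((1 - α : ℝ) : ℂ) / w₀ ^ 2 ≠ 0 :=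
  stmt1_general μ α hα c hc
end

section
/- Assume hypothesis (H), let c ∈ A_α, let w₀ be the unique element with Im(w₀) > 0 of {w ∈ ℂ ∖ ℝ : w·G_μ(w + c) = 1 − α}, let V ⊂ ℝ be compact, let ε ∈ (0, Im(w₀)) and let j ∈ ℕ. For n ∈ ℕ, v ∈ V and w with Im(w) > 0 define h_{n,v}(w) := (1/n)·Σ_{i=1}^n Log(w + c + v/n − x⁽ⁿ⁾ᵢ) − ((n − q_n)/n)·Log(w) and h(w) := ∫_ℝ Log(w + c − x) dμ(x) − (1 − α)·Log(w), where Log is the principal branch of the complex logarithm (these are well defined and holomorphic on the closed ball B̄(w₀, ε), since every point of this ball has positive imaginary part). Then lim_{n→∞} sup_{v∈V} sup_{w ∈ B̄(w₀, ε)} | h_{n,v}^{(j)}(w) − h^{(j)}(w) | = 0, where the superscript (j) denotes the j-th complex derivative. -/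
open MeasureTheory Filter Complex Topology Set
open scoped NNReal BoundedContinuousFunction

/-!
Derivatives of holomorphic functions converge locally uniformly along with the functions
(Weierstrass), so it suffices to show `h_{n,v} → h` locally uniformly on the upper half-plane,
uniformly in `v ∈ V`. On `{d ≤ Im z}` the logarithm is `d⁻¹`-Lipschitz, hence so are all the
empirical log potentials `z ↦ (1/n) Σ log (z - xᵢ)`; weak convergence (applied to `log (z - ·)`
truncated to `[a, b]`) gives their pointwise convergence, and equicontinuity (Ascoli) upgrades it to
uniform convergence on compacta. The real shift `v / n` moves a potential by at most
`|v| / (n d)`, and the coefficient `(n - q n) / n` tends to `1 - α`.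
-/

theorem EquicontinuousOn.tendstoUniformlyOn_of_tendsto {ι X α : Type*} [TopologicalSpace X]
    [UniformSpace α] {F : ι → X → α} {f : X → α} {l : Filter ι} {K : Set X} (hK : IsCompact K)
    (hF : EquicontinuousOn F K) (hlim : ∀ x ∈ K, Tendsto (F · x) l (𝓝 (f x))) :
    TendstoUniformlyOn F f l K := by
  have h := (EquicontinuousOn.tendsto_uniformOnFun_iff_pi' (𝔖 := {K}) (by simpa) (by simpa)
    l f).2 ?_
  · exact UniformOnFun.tendsto_iff_tendstoUniformlyOn.1 h K rfl
  · rw [tendsto_pi_nhds]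
    rintro ⟨x, hx⟩
    exact hlim x (by simpa using hx)

theorem lipschitzOnWith_log {d : ℝ≥0} (hd : 0 < d) :
    LipschitzOnWith d⁻¹ log {z : ℂ | d ≤ z.im} := by
  have hconvex : Convex ℝ {z : ℂ | d ≤ z.im} :=
    convex_halfSpace_ge ⟨fun _ _ => add_im _ _, fun _ _ => by simp⟩ d
  refine hconvex.lipschitzOnWith_of_nnnorm_hasDerivWithin_le (f' := fun z => z⁻¹)
    (fun z hz => (hasDerivAt_log (Or.inr ?_)).hasDerivWithinAt) fun z hz => ?_
  · exact (lt_of_lt_of_le (NNReal.coe_pos.2 hd) hz).ne'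
  · rw [nnnorm_inv]
    refine inv_anti₀ hd ?_
    rw [← NNReal.coe_le_coe, coe_nnnorm]
    exact hz.trans ((le_abs_self _).trans (abs_im_le_norm z))

noncomputable def empiricalLogPotential {n : ℕ} (y : Fin n → ℝ) (z : ℂ) : ℂ :=
  (∑ i, log (z - y i)) / n

noncomputable def logPotential (μ : Measure ℝ) (z : ℂ) : ℂ := ∫ t, log (z - t) ∂μ

theorem lipschitzOnWith_empiricalLogPotential {n : ℕ} (y : Fin n → ℝ) {d : ℝ≥0} (hd : 0 < d) :
    LipschitzOnWith d⁻¹ (empiricalLogPotential y) {z : ℂ | d ≤ z.im} := by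
  refine LipschitzOnWith.of_dist_le_mul fun z hz z' hz' => ?_
  have hlog : ∀ i, ‖log (z - y i) - log (z' - y i)‖ ≤ d⁻¹ * dist z z' := fun i => by
    rw [← dist_eq_norm, ← dist_sub_right z z' (y i : ℂ)]
    exact (lipschitzOnWith_log hd).dist_le_mul _ (by simpa using hz) _ (by simpa using hz')
  rcases n.eq_zero_or_pos with rfl | hn
  · simp only [empiricalLogPotential, Finset.univ_eq_empty, Finset.sum_empty, CharP.cast_eq_zero,
      div_zero, dist_self]
    positivity
  rw [empiricalLogPotential, empiricalLogPotential, dist_eq_norm, ← sub_div,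
    ← Finset.sum_sub_distrib, norm_div, Complex.norm_natCast, div_le_iff₀ (by positivity)]
  calc ‖∑ i, (log (z - y i) - log (z' - y i))‖ ≤ ∑ i, ‖log (z - y i) - log (z' - y i)‖ :=
        norm_sum_le _ _
    _ ≤ ∑ _i : Fin n, d⁻¹ * dist z z' := Finset.sum_le_sum fun i _ => hlog i
    _ = d⁻¹ * dist z z' * n := by simp [mul_comm]

section WeakConvergence

variable {a b : ℝ} {x : (n : ℕ) → Fin n → ℝ} {μ : Measure ℝ} [IsFiniteMeasure μ]

theorem tendsto_mean_of_boundedContinuous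
    (hweak : ∀ f : ℝ →ᵇ ℝ, Tendsto (fun n : ℕ => (∑ i, f (x n i)) / n) atTop (𝓝 (∫ t, f t ∂μ)))
    (f : ℝ →ᵇ ℂ) :
    Tendsto (fun n : ℕ => (∑ i, f (x n i)) / (n : ℂ)) atTop (𝓝 (∫ t, f t ∂μ)) := by
  have hre : Tendsto (fun n : ℕ => ((∑ i, f (x n i)) / (n : ℂ)).re) atTop
      (𝓝 (∫ t, f t ∂μ).re) := by
    have h : ∫ t, (f t).re ∂μ = (∫ t, f t ∂μ).re := integral_re (f.integrable μ)
    simpa [h] using hweak (f.comp _ reCLM.lipschitz)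
  have him : Tendsto (fun n : ℕ => ((∑ i, f (x n i)) / (n : ℂ)).im) atTop
      (𝓝 (∫ t, f t ∂μ).im) := by
    have h : ∫ t, (f t).im ∂μ = (∫ t, f t ∂μ).im := integral_im (f.integrable μ)
    simpa [h] using hweak (f.comp _ imCLM.lipschitz)
  simpa only [Function.comp_def, re_add_im] using ((continuous_ofReal.tendsto _).comp hre).add
    (((continuous_ofReal.tendsto _).comp him).mul_const I)

theorem tendsto_mean_of_continuousOn_Icc
    (hweak : ∀ f : ℝ →ᵇ ℝ, Tendsto (fun n : ℕ => (∑ i, f (x n i)) / n) atTop (𝓝 (∫ t, f t ∂μ)))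
    (hab : a ≤ b) (hx : ∀ n i, x n i ∈ Icc a b) (hμ : μ (Icc a b)ᶜ = 0)
    {g : ℝ → ℂ} (hg : ContinuousOn g (Icc a b)) :
    Tendsto (fun n : ℕ => (∑ i, g (x n i)) / (n : ℂ)) atTop (𝓝 (∫ t, g t ∂μ)) := by
  have : CompactSpace (Icc a b) := isCompact_iff_compactSpace.1 isCompact_Icc
  let G : ℝ →ᵇ ℂ := (BoundedContinuousFunction.mkOfCompact ⟨_, hg.domRestrict⟩).compContinuous
    ⟨projIcc a b hab, continuous_projIcc⟩
  have hG : EqOn G g (Icc a b) := fun t ht => by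
    simp [G, projIcc_of_mem hab ht]
  have hGμ : (G : ℝ → ℂ) =ᵐ[μ] g := (ae_iff.2 hμ).mono fun t ht => hG ht
  simpa only [fun n i => hG (hx n i), integral_congr_ae hGμ] using
    tendsto_mean_of_boundedContinuous hweak G

theorem tendstoUniformlyOn_empiricalLogPotential
    (hweak : ∀ f : ℝ →ᵇ ℝ, Tendsto (fun n : ℕ => (∑ i, f (x n i)) / n) atTop (𝓝 (∫ t, f t ∂μ)))
    (hab : a ≤ b) (hx : ∀ n i, x n i ∈ Icc a b) (hμ : μ (Icc a b)ᶜ = 0)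
    {K : Set ℂ} (hK : IsCompact K) (hK₀ : ∀ z ∈ K, 0 < z.im) :
    TendstoUniformlyOn (fun n => empiricalLogPotential (x n)) (logPotential μ) atTop K := by
  obtain ⟨d, hd, hdK⟩ := hK.exists_forall_le' continuous_im.continuousOn hK₀
  lift d to ℝ≥0 using hd.le
  refine EquicontinuousOn.tendstoUniformlyOn_of_tendsto hK ?_ fun z hz => ?_
  · have hlip := LipschitzOnWith.uniformEquicontinuousOn (fun n => empiricalLogPotential (x n)) _
      fun n => lipschitzOnWith_empiricalLogPotential (x n) hd
    exact hlip.equicontinuousOn.mono fun z hz => hdK z hz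
  · refine tendsto_mean_of_continuousOn_Icc (g := fun t : ℝ => log (z - t)) hweak hab hx hμ
      fun t _ => ?_
    exact ((continuous_const.sub continuous_ofReal).continuousAt.clog
      (Or.inr (by simpa using (hK₀ z hz).ne'))).continuousWithinAt

theorem tendstoLocallyUniformlyOn_empiricalLogPotential_add
    (hweak : ∀ f : ℝ →ᵇ ℝ, Tendsto (fun n : ℕ => (∑ i, f (x n i)) / n) atTop (𝓝 (∫ t, f t ∂μ)))
    (hab : a ≤ b) (hx : ∀ n i, x n i ∈ Icc a b) (hμ : μ (Icc a b)ᶜ = 0)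
    (c : ℝ) {V : Set ℝ} (hV : Bornology.IsBounded V) :
    TendstoLocallyUniformlyOn
      (fun p : ℕ × ℝ => fun w => empiricalLogPotential (x p.1) (w + c + p.2 / p.1))
      (fun w => logPotential μ (w + c)) (atTop ×ˢ 𝓟 V) {w : ℂ | 0 < w.im} := by
  rw [tendstoLocallyUniformlyOn_iff_forall_isCompact (isOpen_lt continuous_const continuous_im)]
  intro K hKU hK
  obtain ⟨d, hd, hdK⟩ := hK.exists_forall_le' continuous_im.continuousOn hKU
  lift d to ℝ≥0 using hd.le
  obtain ⟨M, hM⟩ := hV.exists_norm_le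
  have hconv := tendstoUniformlyOn_empiricalLogPotential hweak hab hx hμ
    (hK.image (continuous_add_const (c : ℂ))) (by rintro _ ⟨w, hw, rfl⟩; simpa using hKU hw)
  have hsmall : Tendsto (fun n : ℕ => (d : ℝ)⁻¹ * (M / n)) atTop (𝓝 0) := by
    simpa using (tendsto_const_div_atTop_nhds_zero_nat M).const_mul (d : ℝ)⁻¹
  rw [Metric.tendstoUniformlyOn_iff] at hconv ⊢
  intro δ hδ
  filter_upwards [tendsto_fst.eventually ((hconv (δ / 2) (half_pos hδ)).and
      (hsmall.eventually (gt_mem_nhds (half_pos hδ)))),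
    tendsto_snd.eventually (mem_principal_self V)] with ⟨n, v⟩ ⟨hn, hn'⟩ hv w hw
  have hshift : dist (empiricalLogPotential (x n) (w + c))
      (empiricalLogPotential (x n) (w + c + v / n)) ≤ (d : ℝ)⁻¹ * (M / n) := by
    refine ((lipschitzOnWith_empiricalLogPotential (x n) hd).dist_le_mul _ ?_ _ ?_).trans ?_
    · simpa using hdK w hw
    · simpa using hdK w hw
    · rw [dist_self_add_right, norm_div, Complex.norm_natCast, norm_real, NNReal.coe_inv]
      gcongr
      exact hM v hv
  calc dist (logPotential μ (w + c)) (empiricalLogPotential (x n) (w + c + v / n))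
      ≤ dist (logPotential μ (w + c)) (empiricalLogPotential (x n) (w + c))
        + dist (empiricalLogPotential (x n) (w + c))
          (empiricalLogPotential (x n) (w + c + v / n)) := dist_triangle _ _ _
    _ < δ / 2 + δ / 2 :=
        add_lt_add_of_lt_of_le (hn _ (mem_image_of_mem _ hw)) (hshift.trans hn'.le)
    _ = δ := add_halves δ

end WeakConvergence

theorem tendsto_natCast_sub_div_self {q : ℕ → ℕ} {α : ℝ}
    (hq : Tendsto (fun n : ℕ => (q n : ℝ) / n) atTop (𝓝 α)) :
    Tendsto (fun n : ℕ => ((n : ℂ) - q n) / n) atTop (𝓝 ((1 - α : ℝ) : ℂ)) := by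
  refine ((continuous_ofReal.tendsto _).comp (tendsto_const_nhds.sub hq)).congr'
    ((eventually_ne_atTop 0).mono fun n hn => ?_)
  simp only [Function.comp_apply]
  push_cast
  field_simp

theorem Filter.Tendsto.tendstoLocallyUniformlyOn_mul_log {ι : Type*} {l : Filter ι} {u : ι → ℂ}
    {β : ℂ} (hu : Tendsto u l (𝓝 β)) :
    TendstoLocallyUniformlyOn (fun i w => u i * Complex.log w) (fun w => β * Complex.log w) l
      {w : ℂ | 0 < w.im} := by
  have hlog : TendstoUniformlyOn (fun _ : ι => Complex.log) Complex.log l {w : ℂ | 0 < w.im} :=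
    fun _ hU => Eventually.of_forall fun _ _ _ => refl_mem_uniformity hU
  refine (hu.tendstoUniformlyOn_const _).tendstoLocallyUniformlyOn.fun_mul₀_of_isBoundedUnder
    hlog.tendstoLocallyUniformlyOn (fun _ _ => isBoundedUnder_const) fun w hw => ?_
  have hcont : ContinuousAt Complex.log w := continuousAt_clog (Or.inr (ne_of_gt hw))
  exact ((hcont.tendsto.dist tendsto_const_nhds).mono_left nhdsWithin_le_nhds).isBoundedUnder_le

theorem TendstoLocallyUniformlyOn.iteratedDeriv {ι E : Type*} [NormedAddCommGroup E]
    [NormedSpace ℂ E] [CompleteSpace E] {φ : Filter ι} {F : ι → ℂ → E} {f : ℂ → E} {U : Set ℂ}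
    (hf : TendstoLocallyUniformlyOn F f φ U) (hF : ∀ᶠ i in φ, DifferentiableOn ℂ (F i) U)
    (hU : IsOpen U) (k : ℕ) :
    TendstoLocallyUniformlyOn (fun i => iteratedDeriv k (F i)) (iteratedDeriv k f) φ U := by
  induction k with
  | zero => simpa using hf
  | succ k ih =>
    simp only [iteratedDeriv_succ]
    refine ih.deriv (hF.mono fun i hi => ?_) hU
    rw [iteratedDeriv_eq_iterate]
    exact ((hi.analyticOnNhd hU).iterated_deriv k).differentiableOn

theorem stmt3_general (a b : ℝ) (hab : a < b) (q : ℕ → ℕ) (x : (n : ℕ) → Fin n → ℝ)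
    (hx_mem : ∀ n, ∀ i : Fin n, x n i ∈ Set.Icc a b)
    (μ : Measure ℝ) [IsProbabilityMeasure μ]
    (hsupp : μ (Set.Icc a b)ᶜ = 0)
    (hweak : ∀ f : BoundedContinuousFunction ℝ ℝ,
      Tendsto (fun n : ℕ => (∑ i : Fin n, f (x n i)) / n) atTop (nhds (∫ t, f t ∂μ)))
    (α : ℝ)
    (hqlim : Tendsto (fun n : ℕ => (q n : ℝ) / n) atTop (nhds α))
    (c : ℝ)
    (w₀ : ℂ)
    (V : Set ℝ) (hV : IsCompact V)
    (ε : ℝ) (hε : ε ∈ Set.Ioo 0 w₀.im) (j : ℕ) :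
    let hn : ℕ → ℝ → ℂ → ℂ := fun n v w =>
      (1 / (n : ℂ)) * (∑ i : Fin n, Complex.log (w + (c : ℂ) + (v : ℂ) / n - (x n i : ℂ)))
        - (((n : ℂ) - (q n : ℂ)) / (n : ℂ)) * Complex.log w
    let h : ℂ → ℂ := fun w =>
      (∫ t : ℝ, Complex.log (w + (c : ℂ) - (t : ℂ)) ∂μ) - ((1 - α : ℝ) : ℂ) * Complex.log w
    ∀ δ > 0, ∃ N : ℕ, ∀ n ≥ N, ∀ v ∈ V, ∀ w ∈ Metric.closedBall w₀ ε,
      ‖iteratedDeriv j (hn n v) w - iteratedDeriv j h w‖ < δ := by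
  intro hn h δ hδ
  set U := {w : ℂ | 0 < w.im}
  have hU : IsOpen U := isOpen_lt continuous_const continuous_im
  have hball : Metric.closedBall w₀ ε ⊆ U := fun w hw => by
    have hdist := (abs_im_le_norm (w - w₀)).trans (mem_closedBall_iff_norm.1 hw)
    rw [sub_im] at hdist
    show 0 < w.im
    linarith [hε.2, (abs_le.1 hdist).1]
  have hdiff : ∀ p : ℕ × ℝ, DifferentiableOn ℂ (hn p.1 p.2) U := fun p w hw => by
    have hw' : w.im ≠ 0 := ne_of_gt hw
    refine DifferentiableAt.differentiableWithinAt (.sub (.const_mul (.fun_sum fun i _ => ?_) _)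
      (.const_mul (differentiableAt_id.clog (Or.inr hw')) _))
    exact (((differentiableAt_id.add_const _).add_const _).sub_const _).clog (Or.inr (by simpa))
  have hconv : TendstoLocallyUniformlyOn (fun p : ℕ × ℝ => hn p.1 p.2) h (atTop ×ˢ 𝓟 V) U := by
    refine ((tendstoLocallyUniformlyOn_empiricalLogPotential_add hweak hab.le hx_mem hsupp c
      hV.isBounded).fun_sub ((tendsto_natCast_sub_div_self hqlim).comp
        tendsto_fst).tendstoLocallyUniformlyOn_mul_log).congr fun p w _ => ?_
    simp only [hn, empiricalLogPotential, Function.comp_apply]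
    ring
  have hj := (tendstoLocallyUniformlyOn_iff_forall_isCompact hU).1
    (hconv.iteratedDeriv (Eventually.of_forall hdiff) hU j) _ hball (isCompact_closedBall w₀ ε)
  obtain ⟨N, hN⟩ := eventually_atTop.1
    (eventually_prod_principal_iff.1 (Metric.tendstoUniformlyOn_iff.1 hj δ hδ))
  exact ⟨N, fun n hnN v hv w hw => by rw [← dist_eq_norm, dist_comm]; exact hN n hnN v hv w hw⟩

theorem stmt3 (a b : ℝ) (hab : a < b) (q : ℕ → ℕ) (x : (n : ℕ) → Fin n → ℝ)
    (hq : ∀ n, 1 ≤ n → 1 ≤ q n ∧ q n ≤ n)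
    (hx_mem : ∀ n, ∀ i : Fin n, x n i ∈ Set.Icc a b)
    (hx_dec : ∀ n, StrictAnti (x n))
    (μ : Measure ℝ) [IsProbabilityMeasure μ]
    (hsupp : μ (Set.Icc a b)ᶜ = 0)
    (hnotpoint : ∀ t : ℝ, μ ≠ Measure.dirac t)
    (hweak : ∀ f : BoundedContinuousFunction ℝ ℝ,
      Tendsto (fun n : ℕ => (∑ i : Fin n, f (x n i)) / n) atTop (nhds (∫ t, f t ∂μ)))
    (α : ℝ) (hα : α ∈ Set.Ioo (0 : ℝ) 1)
    (hqlim : Tendsto (fun n : ℕ => (q n : ℝ) / n) atTop (nhds α))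
    (c : ℝ)
    (w₀ : ℂ) (hw₀ : 0 < w₀.im)
    (hset : {w : ℂ | w.im ≠ 0 ∧ w * cauchyT μ (w + c) = ((1 - α : ℝ) : ℂ)}
      = {w₀, (starRingEnd ℂ) w₀})
    (V : Set ℝ) (hV : IsCompact V)
    (ε : ℝ) (hε : ε ∈ Set.Ioo 0 w₀.im) (j : ℕ) :
    let hn : ℕ → ℝ → ℂ → ℂ := fun n v w =>
      (1 / (n : ℂ)) * (∑ i : Fin n, Complex.log (w + (c : ℂ) + (v : ℂ) / n - (x n i : ℂ)))
        - (((n : ℂ) - (q n : ℂ)) / (n : ℂ)) * Complex.log w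
    let h : ℂ → ℂ := fun w =>
      (∫ t : ℝ, Complex.log (w + (c : ℂ) - (t : ℂ)) ∂μ) - ((1 - α : ℝ) : ℂ) * Complex.log w
    ∀ δ > 0, ∃ N : ℕ, ∀ n ≥ N, ∀ v ∈ V, ∀ w ∈ Metric.closedBall w₀ ε,
      ‖iteratedDeriv j (hn n v) w - iteratedDeriv j h w‖ < δ :=
  stmt3_general a b hab q x hx_mem μ hsupp hweak α hqlim c w₀ V hV ε hε j
end

section
/- Let α ∈ (0,1) and let μ := (1/3)·(δ₋₁ + δ₀ + δ₁). Define g_α := 3α² + 6(2/3 − α)α − (2/3 − α)² and c_α^± := (3/8)·( g_α ± √( g_α² + (64/3)(2/3 − α)³·α ) ). Then: (i) if α ∈ (2/3, 1) then 0 < c_α⁻ < c_α⁺ < 1; if α = 2/3 then c_α⁻ = 0 and c_α⁺ = 1; if α ∈ (0, 2/3) then c_α⁻ < 0 < c_α⁺ < 1; (ii) if α ∈ [2/3, 1) then A_α = (−√(c_α⁺), −√(c_α⁻)) ∪ (√(c_α⁻), √(c_α⁺)), and if α ∈ (0, 2/3) then A_α = (−√(c_α⁺), √(c_α⁺)); (iii)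 c ∈ A_α if and only if there exists w ∈ ℂ ∖ ℝ with α(w+c)³ − c(w+c)² + (2/3 − α)(w+c) + c/3 = 0. -/
open MeasureTheory Complex
open scoped ENNReal

/-!
For nonreal `z = w + c`, clearing the denominator `3 z (z² - 1)` turns `w G_μ(z) = 1 - α` into
`α z³ - c z² + (2/3 - α) z + c/3 = 0`. A real cubic has a nonreal root exactly when its
discriminant is negative, and here the discriminant is `(4/3) (c² - c⁻) (c² - c⁺)`, because `c^±`
are the roots of `t ↦ t² - (3/4) g t - 3 α (2/3 - α)³`. Hence `A_α = {c | c⁻ < c² < c⁺}`, and the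
position of `c^±` relative to `0` and `1` is read off from the values of this quadratic at `0` and
`1` and from its vertex `3g/8`.
-/

open Set

lemma Complex.exists_im_ne_zero_add_ofReal_iff (p : ℂ → Prop) (c : ℝ) :
    (∃ w : ℂ, w.im ≠ 0 ∧ p (w + c)) ↔ ∃ z : ℂ, z.im ≠ 0 ∧ p z :=
  ⟨fun ⟨w, hw, h⟩ => ⟨w + c, by simpa using hw, h⟩,
    fun ⟨z, hz, h⟩ => ⟨z - c, by simpa using hz, by simpa using h⟩⟩

lemma Complex.exists_root_quadratic {a : ℂ} (ha : a ≠ 0) (b c : ℂ) :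
    ∃ z : ℂ, a * z ^ 2 + b * z + c = 0 := by
  obtain ⟨z, hz⟩ := Complex.exists_root (f := .C a * .X ^ 2 + .C b * .X + .C c)
    (by rw [Polynomial.degree_quadratic ha]; norm_num)
  exact ⟨z, by simpa using hz⟩

lemma Complex.exists_root_cubic {a : ℂ} (ha : a ≠ 0) (b c d : ℂ) :
    ∃ z : ℂ, a * z ^ 3 + b * z ^ 2 + c * z + d = 0 := by
  obtain ⟨z, hz⟩ := Complex.exists_root (f := .C a * .X ^ 3 + .C b * .X ^ 2 + .C c * .X + .C d)
    (by rw [Polynomial.degree_cubic ha]; norm_num)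
  exact ⟨z, by simpa using hz⟩

lemma exists_nonreal_root_of_discrim_neg {a b c : ℝ} (ha : a ≠ 0) (h : discrim a b c < 0) :
    ∃ z : ℂ, z.im ≠ 0 ∧ a * z ^ 2 + b * z + c = 0 := by
  obtain ⟨z, hz⟩ := Complex.exists_root_quadratic (ofReal_ne_zero.2 ha) b c
  refine ⟨z, fun him => ?_, hz⟩
  lift z to ℝ using him
  have hroot : a * (z * z) + b * z + c = 0 := by
    rw [← sq]; exact_mod_cast hz
  rw [discrim_eq_sq_of_quadratic_eq_zero hroot] at h
  exact (sq_nonneg _).not_gt h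

namespace Cubic

lemma discr_mk_eq_of_root {R : Type*} [CommRing R] (a b c d u v : R)
    (hre : a * (u ^ 3 - 3 * u * v ^ 2) + b * (u ^ 2 - v ^ 2) + c * u + d = 0)
    (him : 3 * a * u ^ 2 - a * v ^ 2 + 2 * b * u + c = 0) :
    (⟨a, b, c, d⟩ : Cubic R).discr = -4 * v ^ 2 * ((3 * a * u + b) ^ 2 + (a * v) ^ 2) ^ 2 := by
  have hc : c = a * v ^ 2 - 3 * a * u ^ 2 - 2 * b * u := by linear_combination him
  have hd : d = 2 * a * u ^ 3 + 2 * a * u * v ^ 2 + b * u ^ 2 + b * v ^ 2 := by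
    linear_combination hre - u * him
  rw [discr, hc, hd]
  ring

lemma discr_neg_of_nonreal_root {a b c d : ℝ} (ha : a ≠ 0) {z : ℂ} (hz : z.im ≠ 0)
    (hroot : a * z ^ 3 + b * z ^ 2 + c * z + d = 0) : (⟨a, b, c, d⟩ : Cubic ℝ).discr < 0 := by
  have hre := congrArg re hroot
  have him := congrArg im hroot
  simp only [pow_succ, pow_zero, one_mul, add_re, add_im, mul_re, mul_im, ofReal_re,
    ofReal_im, zero_re, zero_im] at hre him
  rw [discr_mk_eq_of_root a b c d z.re z.im (by linear_combination hre)
    (mul_right_cancel₀ hz (by linear_combination him))]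
  have hsum : 0 < (3 * a * z.re + b) ^ 2 + (a * z.im) ^ 2 := by positivity
  have hv : 0 < z.im ^ 2 := by positivity
  nlinarith [mul_pos hv (pow_pos hsum 2)]

lemma exists_nonreal_root_of_discr_neg {a b c d : ℝ} (ha : a ≠ 0)
    (h : (⟨a, b, c, d⟩ : Cubic ℝ).discr < 0) :
    ∃ z : ℂ, z.im ≠ 0 ∧ a * z ^ 3 + b * z ^ 2 + c * z + d = 0 := by
  obtain ⟨z, hz⟩ := Complex.exists_root_cubic (ofReal_ne_zero.2 ha) b c d
  by_cases him : z.im = 0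
  swap
  · exact ⟨z, him, hz⟩
  lift z to ℝ using him with r
  have hr : a * r ^ 3 + b * r ^ 2 + c * r + d = 0 := by exact_mod_cast hz
  have hd : d = -(a * r ^ 3 + b * r ^ 2 + c * r) := by linear_combination hr
  -- the cubic is `(X - r)` times this quadratic
  have hq : discrim a (b + a * r) (c + b * r + a * r ^ 2) < 0 := by
    have : (⟨a, b, c, d⟩ : Cubic ℝ).discr =
        (3 * a * r ^ 2 + 2 * b * r + c) ^ 2 * discrim a (b + a * r) (c + b * r + a * r ^ 2) := by
      rw [discr, discrim, hd]; ring
    nlinarith [sq_nonneg (3 * a * r ^ 2 + 2 * b * r + c)]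
  obtain ⟨w, hw, hwq⟩ := exists_nonreal_root_of_discrim_neg ha hq
  refine ⟨w, hw, ?_⟩
  rw [hd]; push_cast at hwq ⊢
  linear_combination (w - r) * hwq

theorem exists_nonreal_root_iff_discr_neg {a b c d : ℝ} (ha : a ≠ 0) :
    (∃ z : ℂ, z.im ≠ 0 ∧ a * z ^ 3 + b * z ^ 2 + c * z + d = 0) ↔
      (⟨a, b, c, d⟩ : Cubic ℝ).discr < 0 :=
  ⟨fun ⟨_, hz, hroot⟩ => discr_neg_of_nonreal_root ha hz hroot,
    exists_nonreal_root_of_discr_neg ha⟩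

end Cubic

lemma setOf_sq_mem_Ioo_of_neg {a : ℝ} (ha : a < 0) (b : ℝ) :
    {x : ℝ | x ^ 2 ∈ Ioo a b} = Ioo (-√b) √b := by
  ext x
  simp only [mem_ofPred_eq, mem_Ioo, Real.sq_lt]
  exact ⟨And.right, fun h => ⟨ha.trans_le (sq_nonneg x), h⟩⟩

lemma setOf_sq_mem_Ioo_of_nonneg {a : ℝ} (ha : 0 ≤ a) (b : ℝ) :
    {x : ℝ | x ^ 2 ∈ Ioo a b} = Ioo (-√b) (-√a) ∪ Ioo √a √b := by
  have hlt : ∀ x : ℝ, a < x ^ 2 ↔ √a < x ∨ √a < -x := fun x => by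
    rw [← lt_abs, ← Real.sqrt_sq_eq_abs, Real.sqrt_lt_sqrt_iff ha]
  have hsa := Real.sqrt_nonneg a
  ext x
  simp only [mem_ofPred_eq, mem_union, mem_Ioo, hlt, Real.sq_lt]
  constructor
  · rintro ⟨hx | hx, hb⟩
    · exact Or.inr ⟨hx, hb.2⟩
    · exact Or.inl ⟨hb.1, by linarith⟩
  · rintro (hx | hx)
    · exact ⟨Or.inr (by linarith), hx.1, by linarith⟩
    · exact ⟨Or.inl hx.1, by linarith, hx.2⟩

lemma mem_Ioo_of_mul_sub_neg {r₁ r₂ t : ℝ} (h : (t - r₁) * (t - r₂) < 0) (hr : r₁ ≤ r₂) :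
    t ∈ Ioo r₁ r₂ := by
  rcases mul_neg_iff.1 h with ⟨h₁, h₂⟩ | ⟨h₁, h₂⟩
  · exact ⟨by linarith, by linarith⟩
  · exact absurd hr (by linarith)

lemma mul_sub_neg_of_mem_Ioo {r₁ r₂ t : ℝ} (ht : t ∈ Ioo r₁ r₂) : (t - r₁) * (t - r₂) < 0 :=
  mul_neg_of_pos_of_neg (sub_pos.2 ht.1) (sub_neg.2 ht.2)

lemma lt_of_mul_sub_pos_of_lt {r₁ r₂ t : ℝ} (h : 0 < (t - r₁) * (t - r₂))
    (ht : t < (r₁ + r₂) / 2) : t < r₁ := by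
  rcases mul_pos_iff.1 h with ⟨h₁, h₂⟩ | ⟨h₁, _⟩ <;> linarith

lemma lt_of_mul_sub_pos_of_gt {r₁ r₂ t : ℝ} (h : 0 < (t - r₁) * (t - r₂))
    (ht : (r₁ + r₂) / 2 < t) : r₂ < t := by
  rcases mul_pos_iff.1 h with ⟨_, h₂⟩ | ⟨h₁, h₂⟩ <;> linarith

lemma cauchyT_threePoint (w : ℂ) :
    cauchyT ((1/3 : ℝ≥0∞) • (Measure.dirac (-1 : ℝ) + Measure.dirac 0 + Measure.dirac 1)) w
      = ((w + 1)⁻¹ + w⁻¹ + (w - 1)⁻¹) / 3 := by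
  have hint (a : ℝ) : Integrable (fun t : ℝ => (w - t)⁻¹) (Measure.dirac a) :=
    integrable_dirac enorm_lt_top
  rw [cauchyT, integral_smul_measure, integral_add_measure ((hint _).add_measure (hint _)) (hint _),
    integral_add_measure (hint _) (hint _), integral_dirac, integral_dirac, integral_dirac]
  simp only [ENNReal.toReal_div, ENNReal.toReal_one, ENNReal.toReal_ofNat, Complex.real_smul]
  push_cast
  ring

lemma mul_cauchyT_threePoint_eq_iff (α c : ℝ) {w : ℂ} (hw : w.im ≠ 0) :
    w * cauchyT ((1/3 : ℝ≥0∞) • (Measure.dirac (-1 : ℝ) + Measure.dirac 0 + Measure.dirac 1))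
        (w + c) = ((1 - α : ℝ) : ℂ) ↔
      (α : ℂ) * (w + c) ^ 3 - (c : ℂ) * (w + c) ^ 2 + ((2/3 - α : ℝ) : ℂ) * (w + c) + (c : ℂ) / 3
        = 0 := by
  set z := w + c with hz
  have hzim : z.im ≠ 0 := by simpa [hz] using hw
  have hne (a : ℝ) : z - a ≠ 0 := fun h => hzim (by simp [sub_eq_zero.1 h])
  have h₁ : z + 1 ≠ 0 := by simpa using hne (-1)
  have h₀ : z ≠ 0 := by simpa using hne 0
  have h₂ : z - 1 ≠ 0 := by simpa using hne 1
  have key : w * (((z + 1)⁻¹ + z⁻¹ + (z - 1)⁻¹) / 3) - ((1 - α : ℝ) : ℂ) =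
      ((α : ℂ) * z ^ 3 - c * z ^ 2 + ((2/3 - α : ℝ) : ℂ) * z + c / 3) /
        ((z + 1) * z * (z - 1)) := by
    rw [show w = z - c by rw [hz]; ring]
    field_simp
    push_cast
    ring
  rw [cauchyT_threePoint, ← sub_eq_zero, key, div_eq_zero_iff, or_iff_left (by positivity)]

namespace ThreePoint

noncomputable def g (α : ℝ) : ℝ := 3 * α ^ 2 + 6 * (2/3 - α) * α - (2/3 - α) ^ 2

noncomputable def cMinus (α : ℝ) : ℝ :=
  (3/8) * (g α - Real.sqrt (g α ^ 2 + (64/3) * (2/3 - α) ^ 3 * α))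

noncomputable def cPlus (α : ℝ) : ℝ :=
  (3/8) * (g α + Real.sqrt (g α ^ 2 + (64/3) * (2/3 - α) ^ 3 * α))

lemma g_eq (α : ℝ) : g α = 4/3 - 4 * (2/3 - α) ^ 2 := by
  rw [g]; ring

lemma g_sq_add_eq (α : ℝ) :
    g α ^ 2 + (64/3) * (2/3 - α) ^ 3 * α = (16/3) * (1 - α) * (α + 1/3) ^ 3 := by
  rw [g]; ring

lemma cMinus_lt_cPlus {α : ℝ} (hα : α ∈ Ioo (-1/3) 1) : cMinus α < cPlus α := by
  have : 0 < g α ^ 2 + (64/3) * (2/3 - α) ^ 3 * α := by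
    rw [g_sq_add_eq]
    have : 0 < α + 1/3 := by linarith [hα.1]
    have : 0 < 1 - α := by linarith [hα.2]
    positivity
  have := Real.sqrt_pos.2 this
  rw [cMinus, cPlus]
  linarith

lemma cMinus_add_cPlus (α : ℝ) : cMinus α + cPlus α = 3/4 * g α := by
  rw [cMinus, cPlus]; ring

lemma sub_cMinus_mul_sub_cPlus {α : ℝ} (hα : α ∈ Icc (-1/3) 1) (t : ℝ) :
    (t - cMinus α) * (t - cPlus α) = t ^ 2 - 3/4 * g α * t - 3 * α * (2/3 - α) ^ 3 := by
  have hD : 0 ≤ g α ^ 2 + (64/3) * (2/3 - α) ^ 3 * α := by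
    rw [g_sq_add_eq]
    have : 0 ≤ α + 1/3 := by linarith [hα.1]
    have : 0 ≤ 1 - α := by linarith [hα.2]
    positivity
  have hS := Real.sq_sqrt hD
  rw [cMinus, cPlus]
  linear_combination (-9/64) * hS

lemma discr_eq {α : ℝ} (hα : α ∈ Icc (-1/3) 1) (c : ℝ) :
    (⟨α, -c, 2/3 - α, c/3⟩ : Cubic ℝ).discr = 4/3 * ((c ^ 2 - cMinus α) * (c ^ 2 - cPlus α)) := by
  rw [sub_cMinus_mul_sub_cPlus hα, Cubic.discr, g]
  ring

lemma cPlus_lt_one {α : ℝ} (hα : α ∈ Ioo 0 1) (h : α ≠ 2/3) : cPlus α < 1 := by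
  refine lt_of_mul_sub_pos_of_gt (r₁ := cMinus α) ?_ ?_
  · rw [sub_cMinus_mul_sub_cPlus ⟨by linarith [hα.1], hα.2.le⟩, g_eq]
    have : 2/3 - α ≠ 0 := sub_ne_zero.2 h.symm
    have hβ : 0 < (2/3 - α) ^ 2 := by positivity
    have : 0 < 1 - α * (2/3 - α) := by nlinarith [hα.1, hα.2]
    nlinarith [mul_pos hβ this]
  · rw [cMinus_add_cPlus, g_eq]
    nlinarith [sq_nonneg (2/3 - α)]

lemma cMinus_neg_and_cPlus_pos {α : ℝ} (hα : α ∈ Ioo 0 (2/3)) : cMinus α < 0 ∧ 0 < cPlus α := by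
  refine mem_Ioo_of_mul_sub_neg ?_ (cMinus_lt_cPlus ⟨by linarith [hα.1], by linarith [hα.2]⟩).le
  rw [sub_cMinus_mul_sub_cPlus ⟨by linarith [hα.1], by linarith [hα.2]⟩]
  have : 0 < α * (2/3 - α) ^ 3 := mul_pos hα.1 (pow_pos (by linarith [hα.2]) 3)
  linarith

lemma cMinus_pos_of_gt {α : ℝ} (hα : α ∈ Ioo (2/3) 1) : 0 < cMinus α := by
  have hβ : 0 < α - 2/3 := by linarith [hα.1]
  refine lt_of_mul_sub_pos_of_lt (r₂ := cPlus α) ?_ ?_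
  · rw [sub_cMinus_mul_sub_cPlus ⟨by linarith [hα.1], hα.2.le⟩]
    have : 0 < α * (α - 2/3) ^ 3 := mul_pos (by linarith) (pow_pos hβ 3)
    linarith
  · rw [cMinus_add_cPlus, g_eq]
    nlinarith [hα.2]

lemma cMinus_cPlus_two_thirds : cMinus (2/3) = 0 ∧ cPlus (2/3) = 1 := by
  have : Real.sqrt (g (2/3) ^ 2 + (64/3) * (2/3 - 2/3) ^ 3 * (2/3)) = 4/3 := by
    rw [Real.sqrt_eq_iff_eq_sq] <;> norm_num [g]
  rw [cMinus, cPlus, this]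
  norm_num [g]

lemma exists_nonreal_root_iff {α : ℝ} (hα : α ∈ Ioo 0 1) (c : ℝ) :
    (∃ w : ℂ, w.im ≠ 0 ∧ (α : ℂ) * (w + c) ^ 3 - (c : ℂ) * (w + c) ^ 2
        + ((2/3 - α : ℝ) : ℂ) * (w + c) + (c : ℂ) / 3 = 0) ↔
      c ^ 2 ∈ Ioo (cMinus α) (cPlus α) := by
  have hα' : α ∈ Icc (-1/3) 1 := ⟨by linarith [hα.1], hα.2.le⟩
  rw [Complex.exists_im_ne_zero_add_ofReal_iff (fun z => (α : ℂ) * z ^ 3 - (c : ℂ) * z ^ 2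
    + ((2/3 - α : ℝ) : ℂ) * z + (c : ℂ) / 3 = 0)]
  have hcoeff (z : ℂ) : (α : ℂ) * z ^ 3 - (c : ℂ) * z ^ 2 + ((2/3 - α : ℝ) : ℂ) * z + (c : ℂ) / 3
      = α * z ^ 3 + ((-c : ℝ) : ℂ) * z ^ 2 + ((2/3 - α : ℝ) : ℂ) * z + ((c/3 : ℝ) : ℂ) := by
    push_cast; ring
  simp only [hcoeff]
  rw [Cubic.exists_nonreal_root_iff_discr_neg hα.1.ne', discr_eq hα' c]
  constructor
  · intro h
    exact mem_Ioo_of_mul_sub_neg (by linarith) (cMinus_lt_cPlus ⟨by linarith [hα.1], hα.2⟩).le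
  · intro h
    linarith [mul_sub_neg_of_mem_Ioo h]

end ThreePoint

open ThreePoint in
theorem stmt9 (α : ℝ) (hα : α ∈ Set.Ioo (0 : ℝ) 1) :
    let μ : Measure ℝ :=
      (1/3 : ℝ≥0∞) • (Measure.dirac (-1 : ℝ) + Measure.dirac (0 : ℝ) + Measure.dirac (1 : ℝ))
    let g : ℝ := 3 * α ^ 2 + 6 * (2/3 - α) * α - (2/3 - α) ^ 2
    let cm : ℝ := (3/8) * (g - Real.sqrt (g ^ 2 + (64/3) * (2/3 - α) ^ 3 * α))
    let cp : ℝ := (3/8) * (g + Real.sqrt (g ^ 2 + (64/3) * (2/3 - α) ^ 3 * α))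
    let A : Set ℝ :=
      {c : ℝ | ∃ w : ℂ, w.im ≠ 0 ∧ w * cauchyT μ (w + c) = ((1 - α : ℝ) : ℂ)}
    -- (i)
    ((α ∈ Set.Ioo (2/3 : ℝ) 1 → 0 < cm ∧ cm < cp ∧ cp < 1) ∧
      (α = 2/3 → cm = 0 ∧ cp = 1) ∧
      (α ∈ Set.Ioo (0 : ℝ) (2/3) → cm < 0 ∧ 0 < cp ∧ cp < 1)) ∧
    -- (ii)
    ((α ∈ Set.Ico (2/3 : ℝ) 1 →
        A = Set.Ioo (-Real.sqrt cp) (-Real.sqrt cm) ∪ Set.Ioo (Real.sqrt cm) (Real.sqrt cp)) ∧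
      (α ∈ Set.Ioo (0 : ℝ) (2/3) → A = Set.Ioo (-Real.sqrt cp) (Real.sqrt cp))) ∧
    -- (iii)
    (∀ c : ℝ, c ∈ A ↔ ∃ w : ℂ, w.im ≠ 0 ∧
        (α : ℂ) * (w + c) ^ 3 - (c : ℂ) * (w + c) ^ 2
          + ((2/3 - α : ℝ) : ℂ) * (w + c) + (c : ℂ) / 3 = 0) := by
  intro μ g cm cp A
  have hiii (c : ℝ) : c ∈ A ↔ ∃ w : ℂ, w.im ≠ 0 ∧ (α : ℂ) * (w + c) ^ 3 - (c : ℂ) * (w + c) ^ 2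
      + ((2/3 - α : ℝ) : ℂ) * (w + c) + (c : ℂ) / 3 = 0 :=
    exists_congr fun _ => and_congr_right (mul_cauchyT_threePoint_eq_iff α c)
  have hA : A = {c : ℝ | c ^ 2 ∈ Ioo (cMinus α) (cPlus α)} :=
    Set.ext fun c => (hiii c).trans (exists_nonreal_root_iff hα c)
  have i1 (h : α ∈ Ioo (2/3) 1) : 0 < cm ∧ cm < cp ∧ cp < 1 :=
    ⟨cMinus_pos_of_gt h, cMinus_lt_cPlus ⟨by linarith [h.1], h.2⟩,
      cPlus_lt_one hα (by linarith [h.1])⟩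
  have i3 (h : α ∈ Ioo 0 (2/3)) : cm < 0 ∧ 0 < cp ∧ cp < 1 :=
    ⟨(cMinus_neg_and_cPlus_pos h).1, (cMinus_neg_and_cPlus_pos h).2,
      cPlus_lt_one hα (by linarith [h.2])⟩
  refine ⟨⟨i1, fun h => by subst h; exact cMinus_cPlus_two_thirds, i3⟩,
    ⟨fun h => ?_, fun h => ?_⟩, hiii⟩
  · rw [hA]
    refine setOf_sq_mem_Ioo_of_nonneg ?_ _
    rcases h.1.eq_or_lt with h23 | h23
    · exact (h23 ▸ cMinus_cPlus_two_thirds).1.ge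
    · exact (i1 ⟨h23, h.2⟩).1.le
  · rw [hA]
    exact setOf_sq_mem_Ioo_of_neg (i3 h).1 _
end

section
/- Let μ be a Borel probability measure on ℝ with compact support which is not a point mass, let α ∈ (0,1) and c ∈ ℝ, and suppose there exists w ∈ ℂ ∖ ℝ with w·G_μ(w + c) = 1 − α; let w₀ be the unique such element with Im(w₀) > 0. Define f : (0, π) → ℝ by f(s) := ∫_ℝ log | |w₀|·e^{is} + c − x | dμ(x) − (1 − α)·log|w₀|. Then f is twice differentiable on (0, π), f′(Arg(w₀)) = 0, and f″(s) < 0 for every s ∈ (0, π) with f′(s) = 0; consequently Arg(w₀) is the unique critical point of f in (0, π) and is the strict global maximum of f on (0, π). -/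
/-!
Put `r = ‖w₀‖` and `T(s) = ∫ (c - x) / |r e^{is} + c - x|² dμ(x)`. Differentiating under the
integral gives `f'(s) = -r sin s · T(s)`, while `Im (w G_μ(w + c)) = r sin s · T(s)` for
`w = r e^{is}`, so the imaginary part of the equation for `w₀` says that `T (arg w₀) = 0`. Moreover
`T'(s) = 2 r sin s ∫ ((c - x) / |r e^{is} + c - x|²)² dμ(x) > 0` because `μ ≠ δ_c`, so `T` is
strictly increasing on `(0, π)`: `f'` vanishes only at `arg w₀`, where it changes sign from `+` to
`-`, and at a critical point `f''(s) = -r sin s · T'(s) < 0`.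
-/

open MeasureTheory Complex

open Set Filter Topology

section Circle

noncomputable def circleNormSq (r y s : ℝ) : ℝ := (r * Real.cos s + y) ^ 2 + (r * Real.sin s) ^ 2

variable {r y s : ℝ}

theorem normSq_mul_exp_add_ofReal (r y s : ℝ) :
    normSq ((r : ℂ) * exp (s * I) + y) = circleNormSq r y s := by
  simp only [normSq_apply, add_re, mul_re, ofReal_re, exp_ofReal_mul_I_re, ofReal_im,
    exp_ofReal_mul_I_im, zero_mul, sub_zero, add_im, mul_im, add_zero, circleNormSq]
  ring

theorem log_norm_mul_exp_add_sub (r c x s : ℝ) :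
    Real.log ‖(r : ℂ) * exp (s * I) + c - x‖ = Real.log (circleNormSq r (c - x) s) / 2 := by
  rw [norm_def, Real.log_sqrt (normSq_nonneg _), ← normSq_mul_exp_add_ofReal, add_sub_assoc,
    ofReal_sub]

theorem circleNormSq_eq (r y s : ℝ) :
    circleNormSq r y s = r ^ 2 + 2 * r * y * Real.cos s + y ^ 2 := by
  unfold circleNormSq
  linear_combination r ^ 2 * Real.sin_sq_add_cos_sq s

theorem sq_mul_sin_le_circleNormSq (r y s : ℝ) : (r * Real.sin s) ^ 2 ≤ circleNormSq r y s :=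
  le_add_of_nonneg_left (sq_nonneg _)

theorem circleNormSq_pos (hr : 0 < r) (hs : 0 < Real.sin s) : 0 < circleNormSq r y s :=
  (by positivity : 0 < (r * Real.sin s) ^ 2).trans_le (sq_mul_sin_le_circleNormSq r y s)

theorem circleNormSq_le (hr : 0 ≤ r) : circleNormSq r y s ≤ (r + |y|) ^ 2 := by
  have : y * Real.cos s ≤ |y| := (le_abs_self _).trans <| by
    rw [abs_mul]
    exact mul_le_of_le_one_right (abs_nonneg y) (Real.abs_cos_le_one s)
  rw [circleNormSq_eq, add_sq, sq_abs]
  nlinarith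

theorem abs_div_circleNormSq_le {m M : ℝ} (hr : 0 < r) (hm : 0 < m) (hms : m ≤ Real.sin s)
    (hy : |y| ≤ M) : |y / circleNormSq r y s| ≤ M / (r * m) ^ 2 := by
  have hD : (r * m) ^ 2 ≤ circleNormSq r y s :=
    (pow_le_pow_left₀ (by positivity) (mul_le_mul_of_nonneg_left hms hr.le) 2).trans
      (sq_mul_sin_le_circleNormSq r y s)
  rw [abs_div, abs_of_pos ((by positivity : 0 < (r * m) ^ 2).trans_le hD)]
  exact div_le_div₀ ((abs_nonneg y).trans hy) hy (by positivity) hD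

theorem hasDerivAt_circleNormSq (r y s : ℝ) :
    HasDerivAt (circleNormSq r y) (-(2 * r * y * Real.sin s)) s :=
  ((((Real.hasDerivAt_cos s).const_mul r).add_const y).pow 2).add
    (((Real.hasDerivAt_sin s).const_mul r).pow 2) |>.congr_deriv (by ring)

theorem hasDerivAt_log_circleNormSq (hD : circleNormSq r y s ≠ 0) :
    HasDerivAt (fun s => Real.log (circleNormSq r y s) / 2)
      (-(r * Real.sin s * (y / circleNormSq r y s))) s :=
  (((hasDerivAt_circleNormSq r y s).log hD).div_const 2).congr_deriv (by field_simp)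

theorem hasDerivAt_div_circleNormSq (hD : circleNormSq r y s ≠ 0) :
    HasDerivAt (fun s => y / circleNormSq r y s)
      (2 * r * Real.sin s * (y / circleNormSq r y s) ^ 2) s :=
  ((hasDerivAt_const s y).div (hasDerivAt_circleNormSq r y s) hD).congr_deriv
    (by field_simp; ring)

@[fun_prop]
theorem measurable_circleNormSq (r s : ℝ) : Measurable fun y => circleNormSq r y s := by
  unfold circleNormSq
  fun_prop

theorem setOf_sin_half_le_mem_nhds (hs : 0 < Real.sin s) :
    {u | Real.sin s / 2 ≤ Real.sin u} ∈ 𝓝 s :=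
  Real.continuous_sin.continuousAt.preimage_mem_nhds (Ici_mem_nhds (by linarith))

end Circle

theorem im_mul_inv_add_ofReal (w : ℂ) (y : ℝ) :
    (w * (w + y)⁻¹).im = w.im * y / normSq (w + y) := by
  simp only [mul_im, inv_re, inv_im, add_re, add_im, ofReal_re, ofReal_im, add_zero]
  ring

theorem arg_mem_Ioo_of_im_pos {w : ℂ} (hw : 0 < w.im) : arg w ∈ Ioo 0 Real.pi :=
  ⟨(arg_nonneg_iff.2 hw.le).lt_of_ne fun h => hw.ne' (arg_eq_zero_iff.1 h.symm).2,
    (arg_le_pi w).lt_of_ne fun h => hw.ne' (arg_eq_pi_iff.1 h).2⟩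

section Calculus

variable {f f' T p : ℝ → ℝ} {a b s₀ s : ℝ}

theorem strictMonoOn_Ioo_of_hasDerivAt_pos (hf : ∀ s ∈ Ioo a b, HasDerivAt f (f' s) s)
    (hpos : ∀ s ∈ Ioo a b, 0 < f' s) : StrictMonoOn f (Ioo a b) :=
  strictMonoOn_of_hasDerivWithinAt_pos (convex_Ioo a b)
    (fun s hs => (hf s hs).continuousAt.continuousWithinAt)
    (fun s hs => (hf s (interior_subset hs)).hasDerivWithinAt)
    (fun s hs => hpos s (interior_subset hs))

theorem lt_of_hasDerivAt_pos_of_neg (hf : ∀ s ∈ Ioo a b, HasDerivAt f (f' s) s)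
    (hpos : ∀ s ∈ Ioo a s₀, 0 < f' s) (hneg : ∀ s ∈ Ioo s₀ b, f' s < 0)
    (hs₀ : s₀ ∈ Ioo a b) (hs : s ∈ Ioo a b) (hne : s ≠ s₀) : f s < f s₀ := by
  have hcont : ContinuousOn f (Ioo a b) := fun u hu => (hf u hu).continuousAt.continuousWithinAt
  rcases hne.lt_or_gt with hlt | hgt
  · refine strictMonoOn_of_hasDerivWithinAt_pos (f' := f') (convex_Icc s s₀)
      (hcont.mono (Icc_subset_Ioo hs.1 hs₀.2)) ?_ ?_ ⟨le_rfl, hlt.le⟩ ⟨hlt.le, le_rfl⟩ hlt <;>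
      rw [interior_Icc] <;> intro u hu
    · exact (hf u ⟨hs.1.trans hu.1, hu.2.trans hs₀.2⟩).hasDerivWithinAt
    · exact hpos u ⟨hs.1.trans hu.1, hu.2⟩
  · refine strictAntiOn_of_hasDerivWithinAt_neg (f' := f') (convex_Icc s₀ s)
      (hcont.mono (Icc_subset_Ioo hs₀.1 hs.2)) ?_ ?_ ⟨le_rfl, hgt.le⟩ ⟨hgt.le, le_rfl⟩ hgt <;>
      rw [interior_Icc] <;> intro u hu
    · exact (hf u ⟨hs₀.1.trans hu.1, hu.2.trans hs.2⟩).hasDerivWithinAt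
    · exact hneg u ⟨hu.1, hu.2.trans hs.2⟩

theorem lt_of_hasDerivAt_neg_mul_of_strictMonoOn
    (hf : ∀ s ∈ Ioo a b, HasDerivAt f (-(p s * T s)) s) (hp : ∀ s ∈ Ioo a b, 0 < p s)
    (hT : StrictMonoOn T (Ioo a b)) (hs₀ : s₀ ∈ Ioo a b) (hT₀ : T s₀ = 0) (hs : s ∈ Ioo a b)
    (hne : s ≠ s₀) : f s < f s₀ := by
  refine lt_of_hasDerivAt_pos_of_neg hf (fun u hu => ?_) (fun u hu => ?_) hs₀ hs hne
  · have hu' : u ∈ Ioo a b := ⟨hu.1, hu.2.trans hs₀.2⟩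
    have := hT hu' hs₀ hu.2
    nlinarith [hp u hu']
  · have hu' : u ∈ Ioo a b := ⟨hs₀.1.trans hu.1, hu.2⟩
    have := hT hs₀ hu' hu.1
    nlinarith [hp u hu']

theorem hasDerivAt_deriv_of_hasDerivAt_neg_mul
    (hf : ∀ s ∈ Ioo a b, HasDerivAt f (-(p s * T s)) s) (hs : s ∈ Ioo a b)
    {p' T' : ℝ} (hp : HasDerivAt p p' s) (hT : HasDerivAt T T' s) :
    HasDerivAt (deriv f) (-(p' * T s + p s * T')) s := by
  have hderiv : deriv f =ᶠ[𝓝 s] fun u => -(p u * T u) := by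
    filter_upwards [isOpen_Ioo.mem_nhds hs] with u hu using (hf u hu).deriv
  exact (hp.mul hT).neg.congr_of_eventuallyEq hderiv

theorem deriv_deriv_neg_of_hasDerivAt_neg_mul
    (hf : ∀ s ∈ Ioo a b, HasDerivAt f (-(p s * T s)) s) (hs : s ∈ Ioo a b)
    {p' T' : ℝ} (hp : HasDerivAt p p' s) (hT : HasDerivAt T T' s) (hps : 0 < p s)
    (hT' : 0 < T') (hTs : T s = 0) : deriv (deriv f) s < 0 := by
  rw [(hasDerivAt_deriv_of_hasDerivAt_neg_mul hf hs hp hT).deriv, hTs, mul_zero, zero_add,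
    neg_lt_zero]
  exact mul_pos hps hT'

end Calculus

theorem MeasureTheory.Measure.eq_dirac_of_measure_compl_singleton {α : Type*}
    [MeasurableSpace α] [MeasurableSingletonClass α] {μ : Measure α} [IsProbabilityMeasure μ]
    {a : α} (h : μ {a}ᶜ = 0) : μ = Measure.dirac a := by
  rw [← Measure.restrict_eq_self_of_ae_mem (s := {a}) (mem_ae_iff.2 h),
    Measure.restrict_singleton, prob_compl_eq_zero_iff (measurableSet_singleton a) |>.1 h,
    one_smul]

theorem integral_pos_of_ne_dirac {α : Type*} [MeasurableSpace α] [MeasurableSingletonClass α]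
    {μ : Measure α} [IsProbabilityMeasure μ] {g : α → ℝ} {a : α} (hμ : μ ≠ Measure.dirac a)
    (hg : Integrable g μ) (hg0 : 0 ≤ g) (hpos : ∀ x ≠ a, 0 < g x) : 0 < ∫ x, g x ∂μ := by
  rw [integral_pos_iff_support_of_nonneg hg0 hg]
  refine (pos_iff_ne_zero.2 fun h => hμ ?_).trans_le (measure_mono fun x hx => (hpos x hx).ne')
  exact Measure.eq_dirac_of_measure_compl_singleton h

theorem exists_ae_abs_sub_le_of_isCompact {μ : Measure ℝ} {K : Set ℝ} (hK : IsCompact K)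
    (hμK : μ Kᶜ = 0) (c : ℝ) : ∃ M, ∀ᵐ x ∂μ, |c - x| ≤ M := by
  obtain ⟨R, hR⟩ := hK.isBounded.subset_closedBall c
  have hKae : ∀ᵐ x ∂μ, x ∈ K := mem_ae_iff.2 hμK
  refine ⟨R, hKae.mono fun x hx => ?_⟩
  simpa [abs_sub_comm, Real.dist_eq] using hR hx

noncomputable def circleMoment (μ : Measure ℝ) (r c s : ℝ) : ℝ :=
  ∫ x, (c - x) / circleNormSq r (c - x) s ∂μ

noncomputable def circleMomentSq (μ : Measure ℝ) (r c s : ℝ) : ℝ :=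
  ∫ x, ((c - x) / circleNormSq r (c - x) s) ^ 2 ∂μ

section FiniteMeasure

variable {μ : Measure ℝ} [IsFiniteMeasure μ] {r c M s : ℝ}

theorem hasDerivAt_integral_log_circleNormSq (hr : 0 < r) (hM : ∀ᵐ x ∂μ, |c - x| ≤ M)
    (hs : 0 < Real.sin s) :
    HasDerivAt (fun s => ∫ x, Real.log (circleNormSq r (c - x) s) / 2 ∂μ)
      (-(r * Real.sin s * circleMoment μ r c s)) s := by
  have hm : 0 < Real.sin s / 2 := by linarith
  have hlog : ∀ᵐ x ∂μ, |Real.log (circleNormSq r (c - x) s) / 2|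
      ≤ max |Real.log ((r * Real.sin s) ^ 2)| |Real.log ((r + M) ^ 2)| := hM.mono fun x hx => by
    have hlo := sq_mul_sin_le_circleNormSq r (c - x) s
    have hhi := (circleNormSq_le (y := c - x) (s := s) hr.le).trans
      (pow_le_pow_left₀ (by positivity) (add_le_add_right hx r) 2)
    have hpos : 0 < (r * Real.sin s) ^ 2 := by positivity
    rw [abs_div, abs_two]
    exact (half_le_self (abs_nonneg _)).trans (abs_le_max_abs_abs (Real.log_le_log hpos hlo)
      (Real.log_le_log (hpos.trans_le hlo) hhi))
  have := (hasDerivAt_integral_of_dominated_loc_of_deriv_le (μ := μ)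
    (F := fun s x => Real.log (circleNormSq r (c - x) s) / 2)
    (F' := fun s x => -(r * Real.sin s * ((c - x) / circleNormSq r (c - x) s)))
    (setOf_sin_half_le_mem_nhds hs)
    (.of_forall fun _ => (by fun_prop : Measurable _).aestronglyMeasurable)
    (.of_bound (by fun_prop : Measurable _).aestronglyMeasurable _ hlog)
    (by fun_prop : Measurable _).aestronglyMeasurable ?_
    (integrable_const (r * (M / (r * (Real.sin s / 2)) ^ 2))) ?_).2
  · rw [integral_neg, integral_const_mul] at this
    exact this
  · filter_upwards [hM] with x hx u hu
    calc ‖-(r * Real.sin u * ((c - x) / circleNormSq r (c - x) u))‖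
        = r * |Real.sin u| * |(c - x) / circleNormSq r (c - x) u| := by
          rw [norm_neg, Real.norm_eq_abs, abs_mul, abs_mul, abs_of_pos hr]
      _ ≤ r * 1 * (M / (r * (Real.sin s / 2)) ^ 2) := by
          gcongr
          exacts [Real.abs_sin_le_one u, abs_div_circleNormSq_le hr hm hu hx]
      _ = _ := by ring
  · exact .of_forall fun x u hu =>
      hasDerivAt_log_circleNormSq (circleNormSq_pos hr (hm.trans_le hu)).ne'

theorem hasDerivAt_circleMoment (hr : 0 < r) (hM : ∀ᵐ x ∂μ, |c - x| ≤ M)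
    (hs : 0 < Real.sin s) :
    HasDerivAt (circleMoment μ r c) (2 * r * Real.sin s * circleMomentSq μ r c s) s := by
  have hm : 0 < Real.sin s / 2 := by linarith
  have := (hasDerivAt_integral_of_dominated_loc_of_deriv_le (μ := μ)
    (F := fun s x => (c - x) / circleNormSq r (c - x) s)
    (F' := fun s x => 2 * r * Real.sin s * ((c - x) / circleNormSq r (c - x) s) ^ 2)
    (setOf_sin_half_le_mem_nhds hs)
    (.of_forall fun _ => (by fun_prop : Measurable _).aestronglyMeasurable)
    (.of_bound (by fun_prop : Measurable _).aestronglyMeasurable _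
      (hM.mono fun x hx => abs_div_circleNormSq_le hr hs le_rfl hx))
    (by fun_prop : Measurable _).aestronglyMeasurable ?_
    (integrable_const (2 * r * (M / (r * (Real.sin s / 2)) ^ 2) ^ 2)) ?_).2
  · rw [integral_const_mul] at this
    exact this
  · filter_upwards [hM] with x hx u hu
    calc ‖2 * r * Real.sin u * ((c - x) / circleNormSq r (c - x) u) ^ 2‖
        = 2 * r * |Real.sin u| * |(c - x) / circleNormSq r (c - x) u| ^ 2 := by
          rw [Real.norm_eq_abs, abs_mul, abs_mul, abs_mul, abs_pow, abs_two, abs_of_pos hr]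
      _ ≤ 2 * r * 1 * (M / (r * (Real.sin s / 2)) ^ 2) ^ 2 := by
          gcongr
          exacts [Real.abs_sin_le_one u, abs_div_circleNormSq_le hr hm hu hx]
      _ = _ := by ring
  · exact .of_forall fun x u hu =>
      hasDerivAt_div_circleNormSq (circleNormSq_pos hr (hm.trans_le hu)).ne'

theorem integrable_sq_div_circleNormSq (hr : 0 < r) (hM : ∀ᵐ x ∂μ, |c - x| ≤ M)
    (hs : 0 < Real.sin s) :
    Integrable (fun x => ((c - x) / circleNormSq r (c - x) s) ^ 2) μ := by
  refine .of_bound (by fun_prop : Measurable _).aestronglyMeasurable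
    ((M / (r * Real.sin s) ^ 2) ^ 2) (hM.mono fun x hx => ?_)
  rw [Real.norm_eq_abs, abs_pow]
  exact pow_le_pow_left₀ (abs_nonneg _) (abs_div_circleNormSq_le hr hs le_rfl hx) 2

theorem integrable_inv_add_sub {w : ℂ} (hw : 0 < w.im) (c : ℝ) :
    Integrable (fun x : ℝ => (w + c - x)⁻¹) μ := by
  have him (x : ℝ) : (w + c - x).im = w.im := by
    simp only [sub_im, add_im, ofReal_im, add_zero, sub_zero]
  have hne (x : ℝ) : w + c - x ≠ 0 := fun h => hw.ne' (by rw [← him x, h, zero_im])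
  refine .of_bound (Continuous.aestronglyMeasurable (by fun_prop (disch := exact hne)))
    w.im⁻¹ (.of_forall fun x => ?_)
  rw [norm_inv]
  exact inv_anti₀ hw ((him x).symm.trans_le (le_abs_self _) |>.trans (abs_im_le_norm _))

theorem im_mul_cauchyT_add {w : ℂ} (hw : 0 < w.im) (c : ℝ) :
    (w * cauchyT μ (w + c)).im = w.im * circleMoment μ ‖w‖ c (arg w) := by
  have hpolar : w = ‖w‖ * exp (arg w * I) := (norm_mul_exp_arg_mul_I w).symm
  have him (x : ℝ) : (w * (w + c - x)⁻¹).im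
      = w.im * ((c - x) / circleNormSq ‖w‖ (c - x) (arg w)) := by
    rw [add_sub_assoc, ← ofReal_sub, im_mul_inv_add_ofReal, mul_div_assoc]
    nth_rw 2 [hpolar]
    rw [normSq_mul_exp_add_ofReal]
  rw [cauchyT, ← integral_const_mul, ← imCLM_apply,
    ← imCLM.integral_comp_comm ((integrable_inv_add_sub hw c).const_mul w)]
  simp only [imCLM_apply, him]
  exact integral_const_mul _ _

theorem circleMoment_arg_eq_zero {w : ℂ} (hw : 0 < w.im) {c a : ℝ}
    (h : w * cauchyT μ (w + c) = a) : circleMoment μ ‖w‖ c (arg w) = 0 := by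
  have := im_mul_cauchyT_add (μ := μ) hw c
  rw [h, ofReal_im, eq_comm, mul_eq_zero] at this
  exact this.resolve_left hw.ne'

end FiniteMeasure

theorem circleMomentSq_pos {μ : Measure ℝ} [IsProbabilityMeasure μ] {r c M s : ℝ} (hr : 0 < r)
    (hM : ∀ᵐ x ∂μ, |c - x| ≤ M) (hμ : μ ≠ Measure.dirac c) (hs : 0 < Real.sin s) :
    0 < circleMomentSq μ r c s :=
  integral_pos_of_ne_dirac hμ (integrable_sq_div_circleNormSq hr hM hs) (fun _ => sq_nonneg _)
    fun _ hx =>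
      pow_two_pos_of_ne_zero (div_ne_zero (sub_ne_zero.2 hx.symm) (circleNormSq_pos hr hs).ne')

theorem stmt12_general (μ : Measure ℝ) [IsProbabilityMeasure μ]
    (hcomp : ∃ K : Set ℝ, IsCompact K ∧ μ Kᶜ = 0)
    (hnotpoint : ∀ t : ℝ, μ ≠ Measure.dirac t)
    (α : ℝ) (c : ℝ)
    (w₀ : ℂ) (hw₀ : 0 < w₀.im)
    (heq : w₀ * cauchyT μ (w₀ + c) = ((1 - α : ℝ) : ℂ)) :
    let f : ℝ → ℝ := fun s =>
      (∫ t : ℝ, Real.log (norm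
          (((norm w₀ : ℝ) : ℂ) * Complex.exp ((s : ℂ) * Complex.I) + (c : ℂ) - (t : ℂ))) ∂μ)
        - (1 - α) * Real.log (norm w₀)
    (∀ s ∈ Set.Ioo (0 : ℝ) Real.pi, DifferentiableAt ℝ f s ∧ DifferentiableAt ℝ (deriv f) s) ∧
    w₀.arg ∈ Set.Ioo (0 : ℝ) Real.pi ∧
    deriv f w₀.arg = 0 ∧
    (∀ s ∈ Set.Ioo (0 : ℝ) Real.pi, deriv f s = 0 → deriv (deriv f) s < 0) ∧
    (∀ s ∈ Set.Ioo (0 : ℝ) Real.pi, deriv f s = 0 → s = w₀.arg) ∧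
    (∀ s ∈ Set.Ioo (0 : ℝ) Real.pi, s ≠ w₀.arg → f s < f w₀.arg) := by
  intro f
  obtain ⟨K, hK, hμK⟩ := hcomp
  obtain ⟨M, hM⟩ := exists_ae_abs_sub_le_of_isCompact hK hμK c
  set r := ‖w₀‖
  have hr : 0 < r := norm_pos_iff.2 fun h => by simp [h] at hw₀
  have hsin (s : ℝ) (hs : s ∈ Ioo 0 Real.pi) := Real.sin_pos_of_mem_Ioo hs
  have hf : ∀ s ∈ Ioo 0 Real.pi,
      HasDerivAt f (-(r * Real.sin s * circleMoment μ r c s)) s := fun s hs => by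
    simp only [f, log_norm_mul_exp_add_sub]
    exact (hasDerivAt_integral_log_circleNormSq hr hM (hsin s hs)).sub_const _
  have hp (s : ℝ) := (Real.hasDerivAt_sin s).const_mul r
  have hT (s : ℝ) (hs : s ∈ Ioo 0 Real.pi) := hasDerivAt_circleMoment (μ := μ) hr hM (hsin s hs)
  have hT' (s : ℝ) (hs : s ∈ Ioo 0 Real.pi) : 0 < 2 * r * Real.sin s * circleMomentSq μ r c s := by
    have := circleMomentSq_pos hr hM (hnotpoint c) (hsin s hs)
    have := hsin s hs
    positivity
  have hmono := strictMonoOn_Ioo_of_hasDerivAt_pos hT hT'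
  have hs₀ := arg_mem_Ioo_of_im_pos hw₀
  have hT₀ : circleMoment μ r c w₀.arg = 0 := circleMoment_arg_eq_zero hw₀ heq
  have hcrit : ∀ s ∈ Ioo 0 Real.pi, deriv f s = 0 → circleMoment μ r c s = 0 := fun s hs h => by
    rw [(hf s hs).deriv, neg_eq_zero, mul_eq_zero] at h
    exact h.resolve_left (mul_pos hr (hsin s hs)).ne'
  refine ⟨fun s hs => ⟨(hf s hs).differentiableAt,
      (hasDerivAt_deriv_of_hasDerivAt_neg_mul hf hs (hp s) (hT s hs)).differentiableAt⟩, hs₀, ?_,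
    fun s hs h => deriv_deriv_neg_of_hasDerivAt_neg_mul hf hs (hp s) (hT s hs)
      (mul_pos hr (hsin s hs)) (hT' s hs) (hcrit s hs h),
    fun s hs h => hmono.injOn hs hs₀ ((hcrit s hs h).trans hT₀.symm),
    fun s hs => lt_of_hasDerivAt_neg_mul_of_strictMonoOn hf (fun u hu => mul_pos hr (hsin u hu))
      hmono hs₀ hT₀ hs⟩
  rw [(hf _ hs₀).deriv, hT₀, mul_zero, neg_zero]

theorem stmt12 (μ : Measure ℝ) [IsProbabilityMeasure μ]
    (hcomp : ∃ K : Set ℝ, IsCompact K ∧ μ Kᶜ = 0)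
    (hnotpoint : ∀ t : ℝ, μ ≠ Measure.dirac t)
    (α : ℝ) (hα : α ∈ Set.Ioo (0 : ℝ) 1) (c : ℝ)
    (w₀ : ℂ) (hw₀ : 0 < w₀.im)
    (heq : w₀ * cauchyT μ (w₀ + c) = ((1 - α : ℝ) : ℂ))
    (huniq : ∀ w : ℂ, 0 < w.im → w * cauchyT μ (w + c) = ((1 - α : ℝ) : ℂ) → w = w₀) :
    let f : ℝ → ℝ := fun s =>
      (∫ t : ℝ, Real.log (norm
          (((norm w₀ : ℝ) : ℂ) * Complex.exp ((s : ℂ) * Complex.I) + (c : ℂ) - (t : ℂ))) ∂μ)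
        - (1 - α) * Real.log (norm w₀)
    (∀ s ∈ Set.Ioo (0 : ℝ) Real.pi, DifferentiableAt ℝ f s ∧ DifferentiableAt ℝ (deriv f) s) ∧
    w₀.arg ∈ Set.Ioo (0 : ℝ) Real.pi ∧
    deriv f w₀.arg = 0 ∧
    (∀ s ∈ Set.Ioo (0 : ℝ) Real.pi, deriv f s = 0 → deriv (deriv f) s < 0) ∧
    (∀ s ∈ Set.Ioo (0 : ℝ) Real.pi, deriv f s = 0 → s = w₀.arg) ∧
    (∀ s ∈ Set.Ioo (0 : ℝ) Real.pi, s ≠ w₀.arg → f s < f w₀.arg) :=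
  stmt12_general μ hcomp hnotpoint α c w₀ hw₀ heq
end

section
/- Let n ≥ 1, let V : ℝ → ℝ be measurable with ∫_ℝ |x|^k·e^{−V(x)} dx < ∞ for all k ∈ ℕ, and let (ψ_j)_{j≥0} be monic real polynomials with deg ψ_j = j satisfying ∫_ℝ ψ_i(x)·ψ_j(x)·e^{−V(x)} dx = c_i·c_j·δ_{ij} for some reals c_j. Then ∫_{ℝⁿ} ( ∏_{k=1}^n ψ_{n−k}(y_k)·e^{−V(y_k)} ) · Δ_n(y) dy = ∏_{k=0}^{n−1} c_k², where Δ_n(y) := ∏_{1≤i<j≤n}(y_i − y_j). -/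
/-!
Up to reversing the order of the columns, `vdm y` is the Vandermonde determinant, and column
operations with the monic polynomials `ψ j` turn it into `det (ψ_{n-1-j}(y_i))`. Multiplying by
`∏ ψ_{n-1-k}(y_k) e^{-V(y_k)}` and integrating coordinatewise (Andréief's identity) gives the
determinant of the Gram matrix `(∫ ψ_{n-1-i} ψ_{n-1-j} e^{-V})`, which by orthogonality is diagonal
with entries `c_{n-1-i}²`.
-/

open MeasureTheory

/-- The Vandermonde product `∏_{i<j} (y i - y j)`. -/
noncomputable def vdm {n : ℕ} (y : Fin n → ℝ) : ℝ :=
  ∏ i : Fin n, ∏ j : Fin n, if i < j then y i - y j else 1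

open Matrix Polynomial

theorem integral_prod_mul_det {𝕜 ι α : Type*} [RCLike 𝕜] [Fintype ι] [DecidableEq ι]
    [MeasurableSpace α] {μ : Measure α} [SigmaFinite μ] {f g : ι → α → 𝕜}
    (hfg : ∀ i j, Integrable (fun x => f i x * g j x) μ) :
    ∫ y : ι → α, (∏ i, f i (y i)) * (of fun i j => g j (y i)).det ∂Measure.pi (fun _ => μ)
      = (of fun i j => ∫ x, f i x * g j x ∂μ).det := by
  have hexpand : ∀ y : ι → α, (∏ i, f i (y i)) * (of fun i j => g j (y i)).det
      = ∑ σ : Equiv.Perm ι, (Equiv.Perm.sign σ : 𝕜) * ∏ i, f i (y i) * g (σ i) (y i) := by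
    intro y
    rw [← det_transpose, det_apply, Finset.mul_sum]
    refine Finset.sum_congr rfl fun σ _ => ?_
    simp only [transpose_apply, of_apply, Units.smul_def, zsmul_eq_mul, Finset.prod_mul_distrib]
    ring
  simp_rw [hexpand]
  rw [integral_finsetSum _ fun σ _ => ((Integrable.fintype_prod fun i => hfg i (σ i)).const_mul _),
    ← det_transpose, det_apply]
  refine Finset.sum_congr rfl fun σ _ => ?_
  rw [integral_const_mul, integral_fintype_prod_eq_prod (f := fun i x => f i x * g (σ i) x)]
  simp [Units.smul_def]

theorem integrable_pow_mul_of_integrable_abs_pow_mul {μ : Measure ℝ} {w : ℝ → ℝ}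
    (hw : ∀ k : ℕ, Integrable (fun x => |x| ^ k * w x) μ) (k : ℕ) :
    Integrable (fun x => x ^ k * w x) μ := by
  have hw_meas : AEStronglyMeasurable w μ := by simpa using (hw 0).aestronglyMeasurable
  exact (hw k).mono ((continuous_pow k).aestronglyMeasurable.mul hw_meas)
    (.of_forall fun x => by simp)

theorem Polynomial.integrable_eval_mul {μ : Measure ℝ} {w : ℝ → ℝ}
    (hw : ∀ k : ℕ, Integrable (fun x => |x| ^ k * w x) μ) (P : ℝ[X]) :
    Integrable (fun x => P.eval x * w x) μ := by
  simp_rw [eval_eq_sum_range, Finset.sum_mul, mul_assoc]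
  exact integrable_finsetSum _ fun i _ =>
    (integrable_pow_mul_of_integrable_abs_pow_mul hw i).const_mul _

theorem vdm_eq_det_projVandermonde {n : ℕ} (y : Fin n → ℝ) :
    vdm y = (projVandermonde 1 y).det := by
  rw [vdm, det_projVandermonde]
  refine Finset.prod_congr rfl fun i _ => ?_
  rw [← Finset.prod_filter]
  simp [Finset.filter_lt_eq_Ioi]

/-- Conjugating by the reversal `Fin.rev` on both sides turns `projVandermonde 1 y`, with entries
`y i ^ (n - 1 - j)`, into the ordinary Vandermonde matrix of `y ∘ Fin.rev`, without any sign. -/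
theorem vdm_eq_det_eval_rev {n : ℕ} (y : Fin n → ℝ) {ψ : ℕ → ℝ[X]}
    (hmonic : ∀ j, (ψ j).Monic) (hdeg : ∀ j, (ψ j).natDegree = j) :
    vdm y = (of fun i j : Fin n => (ψ j.rev).eval (y i)).det := by
  have hproj :
      projVandermonde 1 y = (vandermonde (y ∘ Fin.rev)).submatrix Fin.revPerm Fin.revPerm := by
    ext i j
    simp [projVandermonde_apply, vandermonde_apply]
  have hψ : (of fun i j : Fin n => (ψ j.rev).eval (y i))
      = (of fun i j : Fin n => (ψ j).eval ((y ∘ Fin.rev) i)).submatrix Fin.revPerm Fin.revPerm := by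
    ext i j
    simp
  rw [vdm_eq_det_projVandermonde, hproj, hψ, det_submatrix_equiv_self Fin.revPerm,
    det_submatrix_equiv_self Fin.revPerm,
    det_eval_matrixOfPolynomials_eq_det_vandermonde _ _ (fun j => hdeg j) (fun j => hmonic j)]

theorem stmt14_general (n : ℕ) (V : ℝ → ℝ)
    (hmom : ∀ k : ℕ, Integrable (fun x : ℝ => |x| ^ k * Real.exp (-V x)))
    (ψ : ℕ → Polynomial ℝ) (hmonic : ∀ j, (ψ j).Monic) (hdeg : ∀ j, (ψ j).natDegree = j)
    (c : ℕ → ℝ)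
    (horth : ∀ i j : ℕ,
      (∫ x : ℝ, (ψ i).eval x * (ψ j).eval x * Real.exp (-V x))
        = if i = j then c i * c j else 0) :
    (∫ y : Fin n → ℝ,
        (∏ k : Fin n, (ψ (n - 1 - (k : ℕ))).eval (y k) * Real.exp (-V (y k))) * vdm y)
      = ∏ k ∈ Finset.range n, (c k) ^ 2 := by
  have hrev : ∀ k : Fin n, n - 1 - (k : ℕ) = k.rev := fun k => by rw [Fin.val_rev]; omega
  have hint : ∀ i j : ℕ, Integrable (fun x => (ψ i).eval x * Real.exp (-V x) * (ψ j).eval x) := by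
    intro i j
    simpa [mul_right_comm] using (ψ i * ψ j).integrable_eval_mul hmom
  have hgram : (of fun i j : Fin n => ∫ x, (ψ i.rev).eval x * Real.exp (-V x) * (ψ j.rev).eval x)
      = diagonal fun i => c i.rev ^ 2 := by
    ext i j
    simp_rw [of_apply, mul_right_comm _ (Real.exp _), horth, diagonal_apply, Fin.val_inj,
      Fin.rev_inj, sq]
    split_ifs with h <;> simp [h]
  simp_rw [hrev, vdm_eq_det_eval_rev _ hmonic hdeg]
  rw [volume_pi,
    integral_prod_mul_det (f := fun (i : Fin n) x => (ψ i.rev).eval x * Real.exp (-V x))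
      (g := fun (j : Fin n) x => (ψ j.rev).eval x) fun i j => hint _ _, hgram, det_diagonal,
    ← Finset.prod_range_reflect, ← Fin.prod_univ_eq_prod_range]
  simp only [hrev]

theorem stmt14 (n : ℕ) (hn : 1 ≤ n) (V : ℝ → ℝ) (hV : Measurable V)
    (hmom : ∀ k : ℕ, Integrable (fun x : ℝ => |x| ^ k * Real.exp (-V x)))
    (ψ : ℕ → Polynomial ℝ) (hmonic : ∀ j, (ψ j).Monic) (hdeg : ∀ j, (ψ j).natDegree = j)
    (c : ℕ → ℝ)
    (horth : ∀ i j : ℕ,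
      (∫ x : ℝ, (ψ i).eval x * (ψ j).eval x * Real.exp (-V x))
        = if i = j then c i * c j else 0) :
    (∫ y : Fin n → ℝ,
        (∏ k : Fin n, (ψ (n - 1 - (k : ℕ))).eval (y k) * Real.exp (-V (y k))) * vdm y)
      = ∏ k ∈ Finset.range n, (c k) ^ 2 :=
  stmt14_general n V hmom ψ hmonic hdeg c horth
end

section
/- Let n ≥ 2, M > 0, let φ₁,…,φ_n : ℝ → ℝ be integrable on [−M, M], and let c₁, c₂, …, c_n ∈ ℝ. Define m₁ := n − 1 and m_i := n − 2 for i ∈ {2,…,n}, and let A be the n × n matrix with entries A_{ij} := ∫_{−M}^{M} φ_j(z)·((z − c_i)^{m_i}/m_i!) dz. Then det A = (1/(n−1)!)·( ∏_{k=0}^{n−2} 1/k! )² · Δ_{n−1}(c₂,…,c_n) · ∫_{[−M,M]ⁿ} ( ∏_{k=1}^n φ_k(z_k) )·Δ_n(z) dz, where Δ_m(y) := ∏_{1≤i<j≤m}(y_i − y_j). In particular det A does not depend on c₁. -/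
open MeasureTheory

/-!
Expanding `det A` by the Leibniz formula and applying Fubini to each term gives
`det A = ∫ ∏ φ_k(z_k) · det (q_i(z_j)) dz` with `q_i(z) = (z - c_i)^{m_i} / m_i!` (Andréief).
The polynomial matrix `(q_i(z_j))` factors as (coefficients of the `q_i`) × (reversed Vandermonde
matrix of `z`). In the coefficient matrix only `q_1` reaches degree `n - 1`, so its first column is
`(1/(n-1)!, 0, …, 0)`, and the remaining minor is a Vandermonde matrix in `-c_2, …, -c_n` with
column `k` scaled by `1 / (k! (n-2-k)!)`.
-/

open Finset Matrix Polynomial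

theorem det_integral_eq_integral_prod_mul_det {ι α 𝕜 : Type*} [Fintype ι] [DecidableEq ι]
    [RCLike 𝕜] [MeasurableSpace α] (μ : Measure α) [SigmaFinite μ] (f g : ι → α → 𝕜)
    (hint : ∀ i j, Integrable (fun z => f j z * g i z) μ) :
    det (of fun i j => ∫ z, f j z * g i z ∂μ)
      = ∫ x, (∏ k, f k (x k)) * det (of fun i j => g i (x j)) ∂(Measure.pi fun _ => μ) := by
  have hterm (σ : Equiv.Perm ι) (x : ι → α) :
      (Equiv.Perm.sign σ : 𝕜) * ∏ i, f i (x i) * g (σ i) (x i)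
        = (∏ k, f k (x k)) * ((Equiv.Perm.sign σ : 𝕜) * ∏ i, g (σ i) (x i)) := by
    rw [prod_mul_distrib]
    ring
  simp_rw [det_apply', of_apply, ← integral_fintype_prod_eq_prod, ← integral_const_mul]
  rw [← integral_finsetSum _ fun σ _ => (Integrable.fintype_prod fun i => hint (σ i) i).const_mul _]
  simp_rw [hterm, ← mul_sum]

section Vandermonde

variable {R : Type*} [CommRing R] {n : ℕ}

theorem det_of_pow_rev (v : Fin n → R) :
    det (of fun i k : Fin n => v i ^ (n - 1 - k : ℕ)) = ∏ i, ∏ j ∈ Ioi i, (v i - v j) := by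
  have hrev : (of fun i k : Fin n => v i ^ (n - 1 - k : ℕ))
      = (vandermonde (v ∘ Fin.rev)).submatrix Fin.revPerm Fin.revPerm := by
    ext i k
    simp only [of_apply, submatrix_apply, Fin.revPerm_apply, vandermonde_apply,
      Function.comp_apply, Fin.rev_rev, Fin.val_rev]
    congr 1
    omega
  rw [hrev, det_submatrix_equiv_self, det_vandermonde, prod_sigma', prod_sigma']
  refine prod_nbij' (fun p => ⟨Fin.rev p.2, Fin.rev p.1⟩) (fun p => ⟨Fin.rev p.2, Fin.rev p.1⟩)
    ?_ ?_ ?_ ?_ ?_ <;> simp [Fin.rev_lt_rev]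

theorem of_eval_eq_of_coeff_rev_mul (p : Fin n → R[X]) (hp : ∀ i, (p i).natDegree < n)
    (z : Fin n → R) :
    (of fun i j => (p i).eval (z j))
      = (of fun i k : Fin n => (p i).coeff (n - 1 - k)) *
          of fun k j : Fin n => z j ^ (n - 1 - k : ℕ) := by
  ext i j
  rw [mul_apply, of_apply, eval_eq_sum_range' (hp i), ← sum_range_reflect,
    ← Fin.sum_univ_eq_sum_range (fun k => (p i).coeff (n - 1 - k) * z j ^ (n - 1 - k))]
  rfl

theorem det_of_eval (p : Fin n → R[X]) (hp : ∀ i, (p i).natDegree < n) (z : Fin n → R) :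
    det (of fun i j => (p i).eval (z j))
      = det (of fun i k : Fin n => (p i).coeff (n - 1 - k)) * ∏ i, ∏ j ∈ Ioi i, (z i - z j) := by
  rw [of_eval_eq_of_coeff_rev_mul p hp, det_mul, ← det_of_pow_rev,
    ← det_transpose (of fun i k : Fin n => z i ^ (n - 1 - k : ℕ))]
  rfl

end Vandermonde

theorem Polynomial.coeff_X_sub_C_pow {R : Type*} [CommRing R] (r : R) (n k : ℕ) :
    ((X - C r) ^ n).coeff k = (-r) ^ (n - k) * (n.choose k : R) := by
  rw [sub_eq_add_neg, ← C_neg, coeff_X_add_C_pow]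

section TaylorMonomial

open scoped Nat

variable {K : Type*} [Field K]

noncomputable def taylorMonomial (r : K) (m : ℕ) : K[X] := C (m ! : K)⁻¹ * (X - C r) ^ m

theorem eval_taylorMonomial (r x : K) (m : ℕ) :
    (taylorMonomial r m).eval x = (x - r) ^ m / m ! := by
  simp [taylorMonomial, div_eq_inv_mul]

theorem natDegree_taylorMonomial_le (r : K) (m : ℕ) : (taylorMonomial r m).natDegree ≤ m :=
  (natDegree_C_mul_le _ _).trans
    ((natDegree_pow_le_of_le m (natDegree_X_sub_C_le r)).trans_eq (mul_one m))

theorem coeff_taylorMonomial [CharZero K] (r : K) {m k : ℕ} (hk : k ≤ m) :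
    (taylorMonomial r m).coeff k = (-r) ^ (m - k) / (k ! * (m - k)!) := by
  rw [taylorMonomial, coeff_C_mul, coeff_X_sub_C_pow, Nat.cast_choose K hk]
  have : (m ! : K) ≠ 0 := Nat.cast_ne_zero.2 m.factorial_ne_zero
  field_simp

theorem coeff_taylorMonomial_of_lt (r : K) {m k : ℕ} (hk : m < k) :
    (taylorMonomial r m).coeff k = 0 :=
  coeff_eq_zero_of_natDegree_lt ((natDegree_taylorMonomial_le r m).trans_lt hk)

theorem prod_factorial_mul_factorial_sub_inv (N : ℕ) :
    ∏ k : Fin (N + 1), (((N - k)! : K) * k !)⁻¹ = (∏ k ∈ range (N + 1), (k ! : K)⁻¹) ^ 2 := by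
  rw [Fin.prod_univ_eq_prod_range (fun k => (((N - k)! : K) * k !)⁻¹), sq]
  simp only [mul_inv, prod_mul_distrib]
  congr 1
  simpa using prod_range_reflect (fun k => (k ! : K)⁻¹) (N + 1)

theorem det_coeff_taylorMonomial [CharZero K] (N : ℕ) (r₀ : K) (r : Fin (N + 1) → K) :
    det (of fun i k : Fin (N + 2) =>
        (Fin.cons (taylorMonomial r₀ (N + 1)) (fun i => taylorMonomial (r i) N) :
          Fin (N + 2) → K[X]) i |>.coeff (N + 1 - k))
      = ((N + 1)! : K)⁻¹ * (∏ k ∈ range (N + 1), (k ! : K)⁻¹) ^ 2 *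
          ∏ i : Fin (N + 1), ∏ j ∈ Ioi i, (r i - r j) := by
  set A := of fun i k : Fin (N + 2) =>
    (Fin.cons (taylorMonomial r₀ (N + 1)) (fun i => taylorMonomial (r i) N) :
      Fin (N + 2) → K[X]) i |>.coeff (N + 1 - k)
  have hminor : A.submatrix Fin.succ Fin.succ
      = of fun i k : Fin (N + 1) => (((N - k : ℕ)! : K) * (k : ℕ)!)⁻¹ * vandermonde (-r) i k := by
    ext i k
    simp only [A, submatrix_apply, of_apply, Fin.cons_succ, Fin.val_succ, vandermonde_apply]
    rw [Nat.add_sub_add_right, coeff_taylorMonomial _ (Nat.sub_le _ _),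
      Nat.sub_sub_self (Nat.lt_succ_iff.1 k.is_lt), Pi.neg_apply, div_eq_inv_mul]
  rw [det_succ_column_zero, sum_eq_single 0]
  · rw [Fin.succAbove_zero, hminor, det_mul_row, det_vandermonde,
      prod_factorial_mul_factorial_sub_inv]
    simp [A, coeff_taylorMonomial, neg_add_eq_sub, mul_assoc]
  · intro i _ hi
    obtain ⟨j, rfl⟩ := Fin.exists_succ_eq.2 hi
    simp [A, coeff_taylorMonomial_of_lt]
  · simp

end TaylorMonomial

theorem vdm_eq_prod_Ioi {n : ℕ} (y : Fin n → ℝ) : vdm y = ∏ i, ∏ j ∈ Ioi i, (y i - y j) := by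
  refine prod_congr rfl fun i _ => ?_
  rw [← prod_filter, filter_lt_eq_Ioi]

theorem prod_ite_lt_and_ne_zero {N : ℕ} (c : Fin (N + 1) → ℝ) :
    (∏ i : Fin (N + 1), ∏ j : Fin (N + 1), if i < j ∧ (i : ℕ) ≠ 0 then c i - c j else 1)
      = vdm (fun i : Fin N => c i.succ) := by
  simp [Fin.prod_univ_succ, vdm, Fin.succ_lt_succ_iff]

theorem det_of_sub_pow_div_factorial (N : ℕ) (c z : Fin (N + 2) → ℝ) :
    det (of fun i j : Fin (N + 2) =>
        (z j - c i) ^ (if (i : ℕ) = 0 then N + 1 else N) /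
          (Nat.factorial (if (i : ℕ) = 0 then N + 1 else N) : ℝ))
      = 1 / (N + 1).factorial * (∏ k ∈ range (N + 1), (1 : ℝ) / k.factorial) ^ 2 *
          vdm (fun i : Fin (N + 1) => c i.succ) * vdm z := by
  set p : Fin (N + 2) → ℝ[X] :=
    Fin.cons (taylorMonomial (c 0) (N + 1)) fun i => taylorMonomial (c i.succ) N
  have hrows : (of fun i j : Fin (N + 2) =>
      (z j - c i) ^ (if (i : ℕ) = 0 then N + 1 else N) /
        (Nat.factorial (if (i : ℕ) = 0 then N + 1 else N) : ℝ))
      = of fun i j => (p i).eval (z j) := by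
    ext i j
    cases i using Fin.cases <;> simp [p, eval_taylorMonomial]
  have hdeg (i : Fin (N + 2)) : (p i).natDegree < N + 2 := by
    cases i using Fin.cases <;>
      exact (natDegree_taylorMonomial_le _ _).trans_lt (by omega)
  rw [hrows, det_of_eval p hdeg, show N + 2 - 1 = N + 1 by omega, det_coeff_taylorMonomial,
    vdm_eq_prod_Ioi, vdm_eq_prod_Ioi]
  simp only [one_div]

theorem stmt15_general (n : ℕ) (hn : 2 ≤ n) (M : ℝ)
    (φ : Fin n → ℝ → ℝ) (hφ : ∀ i, IntegrableOn (φ i) (Set.Icc (-M) M))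
    (c : Fin n → ℝ) :
    Matrix.det (Matrix.of fun i j : Fin n =>
        ∫ z in Set.Icc (-M) M,
          φ j z * ((z - c i) ^ (if (i : ℕ) = 0 then n - 1 else n - 2) /
            (Nat.factorial (if (i : ℕ) = 0 then n - 1 else n - 2))))
      = (1 / (Nat.factorial (n - 1) : ℝ)) *
        (∏ k ∈ Finset.range (n - 1), (1 : ℝ) / (Nat.factorial k)) ^ 2 *
        (∏ i : Fin n, ∏ j : Fin n, if i < j ∧ (i : ℕ) ≠ 0 then c i - c j else 1) *
        ∫ z in (Set.univ.pi fun _ : Fin n => Set.Icc (-M) M),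
          (∏ k : Fin n, φ k (z k)) * vdm z := by
  obtain ⟨N, rfl⟩ : ∃ N, n = N + 2 := ⟨n - 2, by omega⟩
  simp only [show N + 2 - 1 = N + 1 by omega, show N + 2 - 2 = N by omega]
  rw [det_integral_eq_integral_prod_mul_det _ φ
      (fun i z => (z - c i) ^ (if (i : ℕ) = 0 then N + 1 else N) /
        (Nat.factorial (if (i : ℕ) = 0 then N + 1 else N) : ℝ))
      fun i j => (hφ j).mul_continuousOn (by fun_prop) isCompact_Icc,
    volume_pi, Measure.restrict_pi_pi, prod_ite_lt_and_ne_zero]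
  simp_rw [det_of_sub_pow_div_factorial, mul_left_comm _ (_ * vdm _), integral_const_mul]

theorem stmt15 (n : ℕ) (hn : 2 ≤ n) (M : ℝ) (hM : 0 < M)
    (φ : Fin n → ℝ → ℝ) (hφ : ∀ i, IntegrableOn (φ i) (Set.Icc (-M) M))
    (c : Fin n → ℝ) :
    Matrix.det (Matrix.of fun i j : Fin n =>
        ∫ z in Set.Icc (-M) M,
          φ j z * ((z - c i) ^ (if (i : ℕ) = 0 then n - 1 else n - 2) /
            (Nat.factorial (if (i : ℕ) = 0 then n - 1 else n - 2))))
      = (1 / (Nat.factorial (n - 1) : ℝ)) *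
        (∏ k ∈ Finset.range (n - 1), (1 : ℝ) / (Nat.factorial k)) ^ 2 *
        (∏ i : Fin n, ∏ j : Fin n, if i < j ∧ (i : ℕ) ≠ 0 then c i - c j else 1) *
        ∫ z in (Set.univ.pi fun _ : Fin n => Set.Icc (-M) M),
          (∏ k : Fin n, φ k (z k)) * vdm z :=
  stmt15_general n hn M φ hφ c
end

section
/- Let n ≥ 1 and let x, y ∈ ℝⁿ satisfy x₁ > x₂ > ⋯ > x_n and y₁ > y₂ > ⋯ > y_n. Then det[ 1_{y_k > x_j} ]_{j,k=1}^n = 1 if y₁ > x₁ ≥ y₂ > x₂ ≥ ⋯ ≥ y_{n} > x_n (that is, y_j > x_j for all j and x_j ≥ y_{j+1} for all j ≤ n−1), and det[ 1_{y_k > x_j} ]_{j,k=1}^n = 0 otherwise. -/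
theorem stmt16 (n : ℕ) (hn : 1 ≤ n) (x y : Fin n → ℝ)
    (hx : StrictAnti x) (hy : StrictAnti y) :
    (((∀ j : Fin n, x j < y j) ∧ ∀ j k : Fin n, (j : ℕ) + 1 = (k : ℕ) → y k ≤ x j) →
      Matrix.det (Matrix.of fun j k : Fin n => if x j < y k then (1 : ℝ) else 0) = 1) ∧
    (¬ ((∀ j : Fin n, x j < y j) ∧ ∀ j k : Fin n, (j : ℕ) + 1 = (k : ℕ) → y k ≤ x j) →
      Matrix.det (Matrix.of fun j k : Fin n => if x j < y k then (1 : ℝ) else 0) = 0) := by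
  set M : Matrix (Fin n) (Fin n) ℝ := Matrix.of fun j k : Fin n => if x j < y k then 1 else 0
    with hM
  -- number of ones in row i
  set t : Fin n → ℕ := fun i => (Finset.univ.filter fun k => x i < y k).card with ht
  have key : ∀ i k : Fin n, x i < y k ↔ (k : ℕ) < t i := by
    intro i k
    constructor
    · intro h
      have hsub : Finset.Iic k ⊆ Finset.univ.filter fun k' => x i < y k' := by
        intro k' hk'
        simp only [Finset.mem_Iic] at hk'
        simp only [Finset.mem_filter, Finset.mem_univ, true_and]
        exact lt_of_lt_of_le h (hy.antitone hk')
      have := Finset.card_le_card hsub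
      rw [Fin.card_Iic] at this
      simp only [ht]
      omega
    · intro h
      by_contra hc
      push_neg at hc
      have hsub : (Finset.univ.filter fun k' => x i < y k') ⊆ Finset.Iio k := by
        intro k' hk'
        simp only [Finset.mem_filter, Finset.mem_univ, true_and] at hk'
        simp only [Finset.mem_Iio]
        by_contra h2
        push_neg at h2
        exact absurd hk' (not_lt.2 ((hy.antitone h2).trans hc))
      have := Finset.card_le_card hsub
      rw [Fin.card_Iio] at this
      simp only [ht] at h
      omega
  have rows_eq : ∀ i i' : Fin n, t i = t i' → M i = M i' := by
    intro i i' h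
    funext k
    simp only [hM, Matrix.of_apply]
    have hiff : (x i < y k) ↔ (x i' < y k) := by rw [key i k, key i' k, h]
    by_cases hc : x i < y k
    · rw [if_pos hc, if_pos (hiff.1 hc)]
    · rw [if_neg hc, if_neg (fun hh => hc (hiff.2 hh))]
  constructor
  · rintro ⟨h1, h2⟩
    have entry : ∀ j k : Fin n, M j k = if (k : ℕ) ≤ (j : ℕ) then 1 else 0 := by
      intro j k
      simp only [hM, Matrix.of_apply]
      by_cases hk : (k : ℕ) ≤ (j : ℕ)
      · rw [if_pos hk, if_pos (lt_of_lt_of_le (h1 j) (hy.antitone hk))]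
      · push_neg at hk
        have hk1 : (j : ℕ) + 1 < n := lt_of_le_of_lt hk k.isLt
        set k1 : Fin n := ⟨(j : ℕ) + 1, hk1⟩ with hk1def
        have hyk : y k ≤ y k1 := hy.antitone (by simp [hk1def, Fin.le_def]; omega)
        have := h2 j k1 rfl
        rw [if_neg (not_lt.2 (hyk.trans this)), if_neg (not_le.2 hk)]
    have htri : M.BlockTriangular OrderDual.toDual := by
      intro i j hij
      rw [entry]
      exact if_neg (by exact_mod_cast not_le.2 hij)
    rw [Matrix.det_of_lowerTriangular M htri]
    have : ∀ i : Fin n, M i i = 1 := fun i => by rw [entry]; simp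
    simp [this]
  · intro hcond
    rw [not_and_or] at hcond
    rcases hcond with hA | hB
    · -- some y j ≤ x j
      push_neg at hA
      obtain ⟨j, hj⟩ := hA
      have hle : ∀ i : Fin n, i ≤ j → t i ≤ (j : ℕ) := by
        intro i hi
        have hsub : (Finset.univ.filter fun k' => x i < y k') ⊆ Finset.Iio j := by
          intro k' hk'
          simp only [Finset.mem_filter, Finset.mem_univ, true_and] at hk'
          simp only [Finset.mem_Iio]
          by_contra h2
          push_neg at h2
          have : y k' ≤ x i := ((hy.antitone h2).trans hj).trans (hx.antitone hi)
          exact absurd hk' (not_lt.2 this)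
        have := Finset.card_le_card hsub
        rwa [Fin.card_Iio] at this
      by_cases hinj : Set.InjOn t (Finset.Iic j : Finset (Fin n))
      · -- t injective on Iic j with values in range (j+1): surjective, so some row is zero
        have himcard : ((Finset.Iic j).image t).card = (j : ℕ) + 1 := by
          rw [Finset.card_image_of_injOn hinj, Fin.card_Iic]
        have hsub : (Finset.Iic j).image t ⊆ Finset.range ((j : ℕ) + 1) := by
          intro m hm
          simp only [Finset.mem_image] at hm
          obtain ⟨i, hi, rfl⟩ := hm
          simp only [Finset.mem_range]
          exact Nat.lt_succ_of_le (hle i (Finset.mem_Iic.1 hi))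
        have heq : (Finset.Iic j).image t = Finset.range ((j : ℕ) + 1) :=
          Finset.eq_of_subset_of_card_le hsub (by rw [himcard, Finset.card_range])
        have h0 : (0 : ℕ) ∈ (Finset.Iic j).image t := by
          rw [heq]; simp
        simp only [Finset.mem_image] at h0
        obtain ⟨i, _, hi0⟩ := h0
        refine Matrix.det_eq_zero_of_row_eq_zero i fun k => ?_
        simp only [hM, Matrix.of_apply]
        rw [if_neg]
        intro hc
        have := (key i k).1 hc
        omega
      · rw [Set.InjOn] at hinj
        push_neg at hinj
        obtain ⟨i, _, i', _, hti, hii⟩ := hinj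
        exact Matrix.det_zero_of_row_eq hii (rows_eq i i' hti)
    · -- some y (j+1) > x j
      push_neg at hB
      obtain ⟨j, k, hjk, hxy⟩ := hB
      have hge : ∀ i : Fin n, j ≤ i → (j : ℕ) + 2 ≤ t i := by
        intro i hi
        have hsub : Finset.Iic k ⊆ Finset.univ.filter fun k' => x i < y k' := by
          intro k' hk'
          simp only [Finset.mem_Iic] at hk'
          simp only [Finset.mem_filter, Finset.mem_univ, true_and]
          exact lt_of_le_of_lt (hx.antitone hi) (lt_of_lt_of_le hxy (hy.antitone hk'))
        have := Finset.card_le_card hsub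
        rw [Fin.card_Iic] at this
        simp only [ht]
        omega
      have htle : ∀ i : Fin n, t i ≤ n := fun i =>
        le_trans (Finset.card_le_card (Finset.subset_univ _)) (by simp)
      have hmaps : ∀ i ∈ Finset.Ici j, t i ∈ Finset.Icc ((j : ℕ) + 2) n := by
        intro i hi
        simp only [Finset.mem_Icc]
        exact ⟨hge i (Finset.mem_Ici.1 hi), htle i⟩
      have hcard : (Finset.Icc ((j : ℕ) + 2) n).card < (Finset.Ici j).card := by
        rw [Nat.card_Icc, Fin.card_Ici]
        have := j.isLt
        omega
      obtain ⟨i, _, i', _, hii, hti⟩ :=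
        Finset.exists_ne_map_eq_of_card_lt_of_maps_to hcard hmaps
      exact Matrix.det_zero_of_row_eq hii (rows_eq i i' hti)
end

section
/- Let (H_j)_{j≥0} be the monic Hermite polynomials, i.e. H_j is monic of degree j and ∫_ℝ H_i(x)·H_j(x)·e^{−x²/2} dx = √(2π)·i!·j!·δ_{ij} / √(i!·j!) — equivalently ∫_ℝ H_i H_j e^{−x²/2} dx = √(2π)·i!·δ_{ij}. Then for all n ≥ 1, r ∈ {1,…,n−1}, s ∈ {1,…,n} and u, v ∈ ℝ: Σ_{j=n−s}^{n−1} (1/(√(2π)·j!))·H_j^{(n−s)}(v)·∫_u^∞ ((x − u)^{n−r−1}/(n−r−1)!)·H_j(x)·e^{−x²/2} dx = Σ_{j=−min(r,s)}^{−1} (1/(√(2π)·(j+s)!))·H_{j+r}(u)·H_{j+s}(v)·e^{−u²/2} + 1_{s > r}·Σ_{j=−s}^{−r−1} (H_{j+s}(v)/(√(2π)·(j+s)!))·∫_u^∞ ((x − u)^{−j−r−1}/(−j−r−1)!)·e^{−x²/2} dx, where H_j^{(i)} denotes the i-th derivative of H_j. -/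
/-!
Monic orthogonal polynomials are unique, so `H j` is the probabilists' Hermite polynomial
`He_j`: a linear functional vanishing on `H 0, …, H (j - 1)` vanishes on every polynomial of
degree `< j`, and `H j - He_j` has degree `< j`, hence is orthogonal to itself.

With `w x = exp (-x² / 2)` we have `(He_j w)' = -He_{j+1} w`, so one integration by parts gives
`J (m + 1) (j + 1) = J m j` for the tail integrals `J m j = ∫_u^∞ (x - u)^m / m! He_j w`,
while `J 0 (j + 1) = He_j(u) w(u)` and `J m 0` is a pure Gaussian tail moment. Together with
`He_j^{(t)} = j! / (j - t)! He_{j-t}`, the `k`-th term of the left-hand side becomes a term of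
the first or of the second sum on the right, according to whether `n - s + k > n - r - 1`.
-/

open MeasureTheory Polynomial Real Filter Finset Topology
open scoped Nat

namespace Polynomial

theorem derivative_hermite_succ (n : ℕ) :
    derivative (hermite (n + 1)) = ((n + 1 : ℕ) : ℤ[X]) * hermite n := by
  induction n with
  | zero => simp
  | succ n ih =>
    rw [hermite_succ (n + 1), derivative_sub, derivative_mul, derivative_X, ih,
      derivative_natCast_mul, hermite_succ n]
    push_cast
    ring

theorem iterate_derivative_hermite (t n : ℕ) :
    derivative^[t] (hermite n) = (n.descFactorial t : ℤ[X]) * hermite (n - t) := by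
  induction t generalizing n with
  | zero => simp
  | succ t ih =>
    cases n with
    | zero => simp
    | succ n =>
      rw [Function.iterate_succ_apply, derivative_hermite_succ, iterate_derivative_natCast_mul,
        ih, Nat.succ_descFactorial_succ, Nat.succ_sub_succ]
      push_cast
      ring

theorem linearMap_eq_zero_of_degree_lt {R M : Type*} [CommRing R] [AddCommGroup M] [Module R M]
    (L : R[X] →ₗ[R] M) (P : ℕ → R[X]) (hmonic : ∀ i, (P i).Monic)
    (hdeg : ∀ i, (P i).natDegree = i) {j : ℕ} (hL : ∀ i < j, L (P i) = 0) {p : R[X]}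
    (hp : p.degree < j) : L p = 0 := by
  induction j generalizing p with
  | zero => rw [Nat.cast_zero, Nat.WithBot.lt_zero_iff, degree_eq_bot] at hp; rw [hp, map_zero]
  | succ j ih =>
    have hq : (p - p.coeff j • P j).degree < j := by
      rw [degree_lt_iff_coeff_zero]
      intro m hm
      obtain rfl | hm := hm.eq_or_lt
      · have hPj : (P j).coeff j = 1 := by rw [← (hmonic j).coeff_natDegree, hdeg]
        rw [coeff_sub, coeff_smul, hPj, smul_eq_mul, mul_one, sub_self]
      · have hpm : p.coeff m = 0 :=
          coeff_eq_zero_of_degree_lt (hp.trans_le (by exact_mod_cast hm))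
        have hPm : (P j).coeff m = 0 := coeff_eq_zero_of_natDegree_lt (by rwa [hdeg])
        rw [coeff_sub, coeff_smul, hpm, hPm, smul_zero, sub_zero]
    rw [← sub_add_cancel p (p.coeff j • P j), map_add, map_smul, hL j j.lt_succ_self, smul_zero,
      add_zero, ih (fun i hi => hL i (hi.trans j.lt_succ_self)) hq]

end Polynomial

namespace Finset

theorem sum_Icc_neg_eq_sum_Ico {M : Type*} [AddCommMonoid M] (f : ℤ → M) {a s : ℕ}
    (b : ℕ) (has : a ≤ s) :
    ∑ j ∈ Icc (-(a : ℤ)) (-b - 1), f j = ∑ k ∈ Ico (s - a) (s - b), f (k - s) := by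
  refine sum_nbij' (fun j => (j + s).toNat) (fun k => (k : ℤ) - s) ?_ ?_ ?_ ?_
    (fun j _ => congrArg f ?_) <;> intros <;> simp only [mem_Icc, mem_Ico] at * <;> omega

end Finset

noncomputable def hermiteReal (n : ℕ) : ℝ[X] := (hermite n).map (Int.castRingHom ℝ)

theorem hermiteReal_zero : hermiteReal 0 = 1 := by simp [hermiteReal]

theorem hermiteReal_succ (n : ℕ) :
    hermiteReal (n + 1) = X * hermiteReal n - derivative (hermiteReal n) := by
  simp [hermiteReal, hermite_succ, derivative_map]

theorem hermiteReal_monic (n : ℕ) : (hermiteReal n).Monic := (hermite_monic n).map _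

theorem degree_hermiteReal (n : ℕ) : (hermiteReal n).degree = n := by
  rw [hermiteReal, (hermite_monic n).degree_map, degree_hermite]

theorem derivative_hermiteReal_sub_X_mul (n : ℕ) :
    derivative (hermiteReal n) - X * hermiteReal n = -hermiteReal (n + 1) := by
  rw [hermiteReal_succ]; ring

theorem eval_iterate_derivative_hermiteReal_div_factorial {t n : ℕ} (h : t ≤ n) (x : ℝ) :
    (derivative^[t] (hermiteReal n)).eval x / n ! =
      (hermiteReal (n - t)).eval x / (n - t)! := by
  have hd : (n.descFactorial t : ℝ) ≠ 0 := by
    exact_mod_cast (Nat.descFactorial_eq_zero_iff_lt.not.mpr h.not_gt)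
  rw [hermiteReal, iterate_derivative_map, iterate_derivative_hermite, Polynomial.map_mul,
    Polynomial.map_natCast, eval_natCast_mul, ← hermiteReal,
    ← Nat.factorial_mul_descFactorial h]
  push_cast
  field_simp

theorem integrable_eval_mul_exp_neg_sq_div_two (p : ℝ[X]) :
    Integrable fun x => p.eval x * exp (-x ^ 2 / 2) := by
  induction p using Polynomial.induction_on' with
  | add p q hp hq => simp only [eval_add, add_mul]; exact hp.add hq
  | monomial k a =>
    have h := integrable_rpow_mul_exp_neg_mul_sq (b := 1 / 2) (by norm_num)
      (s := k) (neg_one_lt_zero.trans_le k.cast_nonneg)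
    refine (h.const_mul a).congr (ae_of_all _ fun x => ?_)
    simp only [eval_monomial, rpow_natCast]
    ring_nf

theorem tendsto_eval_mul_exp_neg_sq_div_two_cocompact (p : ℝ[X]) :
    Tendsto (fun x => p.eval x * exp (-x ^ 2 / 2)) (cocompact ℝ) (𝓝 0) := by
  induction p using Polynomial.induction_on' with
  | add p q hp hq => simpa only [eval_add, add_mul, add_zero] using hp.add hq
  | monomial k a =>
    rw [tendsto_zero_iff_norm_tendsto_zero]
    have h := (tendsto_rpow_abs_mul_exp_neg_mul_sq_cocompact (a := 1 / 2) (by norm_num)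
      k).const_mul ‖a‖
    rw [mul_zero] at h
    refine h.congr fun x => ?_
    simp only [eval_monomial, norm_mul, norm_pow, Real.norm_eq_abs, rpow_natCast,
      abs_of_pos (exp_pos _)]
    ring_nf

theorem hasDerivAt_eval_mul_exp_neg_sq_div_two (q : ℝ[X]) (x : ℝ) :
    HasDerivAt (fun y => q.eval y * exp (-y ^ 2 / 2))
      ((derivative q - X * q).eval x * exp (-x ^ 2 / 2)) x := by
  have hexp : HasDerivAt (fun y => exp (-y ^ 2 / 2)) (exp (-x ^ 2 / 2) * (-x)) x := by
    refine (hasDerivAt_exp _).comp x ?_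
    exact (((hasDerivAt_pow 2 x).neg).div_const 2).congr_deriv (by ring)
  refine ((q.hasDerivAt x).mul hexp).congr_deriv ?_
  simp only [eval_sub, eval_mul, eval_X]
  ring

noncomputable def gaussIntegralOn (s : Set ℝ) : ℝ[X] →ₗ[ℝ] ℝ where
  toFun p := ∫ x in s, p.eval x * exp (-x ^ 2 / 2)
  map_add' p q := by
    simp only [eval_add, add_mul]
    exact integral_add (integrable_eval_mul_exp_neg_sq_div_two p).integrableOn
      (integrable_eval_mul_exp_neg_sq_div_two q).integrableOn
  map_smul' c p := by
    simp only [eval_smul, smul_eq_mul, mul_assoc, integral_const_mul, RingHom.id_apply]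

theorem gaussIntegralOn_apply (s : Set ℝ) (p : ℝ[X]) :
    gaussIntegralOn s p = ∫ x in s, p.eval x * exp (-x ^ 2 / 2) := rfl

theorem gaussIntegralOn_univ_derivative_sub_X_mul (q : ℝ[X]) :
    gaussIntegralOn Set.univ (derivative q - X * q) = 0 := by
  rw [gaussIntegralOn_apply, Measure.restrict_univ,
    integral_of_hasDerivAt_of_tendsto (hasDerivAt_eval_mul_exp_neg_sq_div_two q)
      (integrable_eval_mul_exp_neg_sq_div_two _)
      ((tendsto_eval_mul_exp_neg_sq_div_two_cocompact q).mono_left atBot_le_cocompact)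
      ((tendsto_eval_mul_exp_neg_sq_div_two_cocompact q).mono_left atTop_le_cocompact), sub_zero]

theorem gaussIntegralOn_Ioi_derivative_sub_X_mul (u : ℝ) (q : ℝ[X]) :
    gaussIntegralOn (Set.Ioi u) (derivative q - X * q) = -(q.eval u * exp (-u ^ 2 / 2)) := by
  rw [gaussIntegralOn_apply,
    integral_Ioi_of_hasDerivAt_of_tendsto' (fun x _ => hasDerivAt_eval_mul_exp_neg_sq_div_two q x)
      (integrable_eval_mul_exp_neg_sq_div_two _).integrableOn
      ((tendsto_eval_mul_exp_neg_sq_div_two_cocompact q).mono_left atTop_le_cocompact), zero_sub]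

theorem gaussIntegralOn_univ_mul_hermiteReal_succ (q : ℝ[X]) (j : ℕ) :
    gaussIntegralOn Set.univ (q * hermiteReal (j + 1)) =
      gaussIntegralOn Set.univ (derivative q * hermiteReal j) := by
  have h := gaussIntegralOn_univ_derivative_sub_X_mul (q * hermiteReal j)
  have hHe := derivative_hermiteReal_sub_X_mul j
  rw [show derivative (q * hermiteReal j) - X * (q * hermiteReal j) =
      derivative q * hermiteReal j - q * hermiteReal (j + 1) by
    rw [derivative_mul]; linear_combination q * hHe, map_sub, sub_eq_zero] at h
  exact h.symm

theorem gaussIntegralOn_univ_mul_hermiteReal (q : ℝ[X]) (j : ℕ) :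
    gaussIntegralOn Set.univ (q * hermiteReal j) =
      gaussIntegralOn Set.univ (derivative^[j] q) := by
  induction j generalizing q with
  | zero => rw [hermiteReal_zero, mul_one, Function.iterate_zero_apply]
  | succ j ih => rw [gaussIntegralOn_univ_mul_hermiteReal_succ, ih, Function.iterate_succ_apply]

theorem gaussIntegralOn_univ_mul_hermiteReal_of_degree_lt {q : ℝ[X]} {j : ℕ}
    (hq : q.degree < j) : gaussIntegralOn Set.univ (q * hermiteReal j) = 0 := by
  rw [gaussIntegralOn_univ_mul_hermiteReal, iterate_derivative_eq_zero_of_degree_lt hq, map_zero]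

theorem eq_zero_of_gaussIntegralOn_univ_mul_self_eq_zero {p : ℝ[X]}
    (h : gaussIntegralOn Set.univ (p * p) = 0) : p = 0 := by
  have hcont : Continuous fun x => (p * p).eval x * exp (-x ^ 2 / 2) := by fun_prop
  have hnonneg : 0 ≤ fun x => (p * p).eval x * exp (-x ^ 2 / 2) := fun x =>
    mul_nonneg (eval_mul (p := p) ▸ mul_self_nonneg (p.eval x)) (exp_pos _).le
  rw [gaussIntegralOn_apply, Measure.restrict_univ, integral_eq_zero_iff_of_nonneg hnonneg
    (integrable_eval_mul_exp_neg_sq_div_two _)] at h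
  replace h := (hcont.ae_eq_iff_eq volume (g := fun _ => 0) continuous_const).mp h
  refine Polynomial.funext fun x => ?_
  simpa [(exp_pos _).ne'] using congrFun h x

theorem eq_hermiteReal_of_orthogonal (H : ℕ → ℝ[X]) (hmonic : ∀ j, (H j).Monic)
    (hdeg : ∀ j, (H j).natDegree = j)
    (horth : ∀ i j, i ≠ j → ∫ x, (H i).eval x * (H j).eval x * exp (-x ^ 2 / 2) = 0)
    (j : ℕ) :
    H j = hermiteReal j := by
  have hdegH : ∀ i, (H i).degree = i := fun i => by
    rw [degree_eq_natDegree (hmonic i).ne_zero, hdeg]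
  set d := H j - hermiteReal j
  have hd : d.degree < j := hdegH j ▸ degree_sub_lt_left (by rw [hdegH, degree_hermiteReal])
    (hmonic j).ne_zero (by rw [(hmonic j).leadingCoeff, (hermiteReal_monic j).leadingCoeff])
  have hdH : gaussIntegralOn Set.univ (d * H j) = 0 :=
    linearMap_eq_zero_of_degree_lt (gaussIntegralOn Set.univ ∘ₗ LinearMap.mulRight ℝ (H j)) H
      hmonic hdeg (fun i hi => by simpa [gaussIntegralOn_apply] using horth i j hi.ne) hd
  have hdHe : gaussIntegralOn Set.univ (d * hermiteReal j) = 0 :=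
    gaussIntegralOn_univ_mul_hermiteReal_of_degree_lt hd
  exact sub_eq_zero.mp (eq_zero_of_gaussIntegralOn_univ_mul_self_eq_zero (by
    rw [mul_sub, map_sub, hdH, hdHe, sub_zero]))

noncomputable def hermiteTail (u : ℝ) (m j : ℕ) : ℝ :=
  ∫ x in Set.Ioi u, ((x - u) ^ m / m !) * (hermiteReal j).eval x * exp (-x ^ 2 / 2)

theorem hermiteTail_eq_gaussIntegralOn (u : ℝ) (m j : ℕ) :
    hermiteTail u m j =
      (m ! : ℝ)⁻¹ * gaussIntegralOn (Set.Ioi u) ((X - C u) ^ m * hermiteReal j) := by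
  rw [hermiteTail, gaussIntegralOn_apply, ← integral_const_mul]
  congr 1 with x
  simp only [eval_mul, eval_pow, eval_sub, eval_X, eval_C]
  ring

theorem hermiteTail_zero_succ (u : ℝ) (j : ℕ) :
    hermiteTail u 0 (j + 1) = (hermiteReal j).eval u * exp (-u ^ 2 / 2) := by
  have h := gaussIntegralOn_Ioi_derivative_sub_X_mul u (hermiteReal j)
  rw [derivative_hermiteReal_sub_X_mul, map_neg, neg_inj] at h
  rw [hermiteTail_eq_gaussIntegralOn, pow_zero, one_mul, h, Nat.factorial_zero, Nat.cast_one,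
    inv_one, one_mul]

theorem hermiteTail_succ_succ (u : ℝ) (m j : ℕ) :
    hermiteTail u (m + 1) (j + 1) = hermiteTail u m j := by
  have hHe := derivative_hermiteReal_sub_X_mul j
  have h := gaussIntegralOn_Ioi_derivative_sub_X_mul u ((X - C u) ^ (m + 1) * hermiteReal j)
  rw [show derivative ((X - C u) ^ (m + 1) * hermiteReal j) -
        X * ((X - C u) ^ (m + 1) * hermiteReal j) =
      ((m : ℝ) + 1) • ((X - C u) ^ m * hermiteReal j) -
        (X - C u) ^ (m + 1) * hermiteReal (j + 1) by
    rw [← C_mul', derivative_mul, derivative_pow]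
    simp only [derivative_sub, derivative_X, derivative_C]
    push_cast
    linear_combination (X - C u) ^ (m + 1) * hHe] at h
  simp only [map_sub, map_smul, eval_mul, eval_pow, eval_sub, eval_X, eval_C, sub_self,
    zero_pow m.succ_ne_zero, zero_mul, neg_zero, sub_eq_zero, smul_eq_mul] at h
  rw [hermiteTail_eq_gaussIntegralOn, hermiteTail_eq_gaussIntegralOn, ← h, Nat.factorial_succ]
  push_cast
  field_simp

theorem hermiteTail_add_add (u : ℝ) (m j t : ℕ) :
    hermiteTail u (m + t) (j + t) = hermiteTail u m j := by
  induction t with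
  | zero => rfl
  | succ t ih => rw [← Nat.add_assoc, ← Nat.add_assoc, hermiteTail_succ_succ, ih]

theorem hermiteTail_of_lt {m j : ℕ} (h : m < j) (u : ℝ) :
    hermiteTail u m j = (hermiteReal (j - m - 1)).eval u * exp (-u ^ 2 / 2) := by
  have hshift := hermiteTail_add_add u 0 (j - m - 1 + 1) m
  rwa [zero_add, show j - m - 1 + 1 + m = j by omega, hermiteTail_zero_succ] at hshift

theorem hermiteTail_of_le {m j : ℕ} (h : j ≤ m) (u : ℝ) :
    hermiteTail u m j =
      ∫ x in Set.Ioi u, ((x - u) ^ (m - j) / (m - j)!) * exp (-x ^ 2 / 2) := by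
  have hshift := hermiteTail_add_add u (m - j) 0 j
  rw [zero_add, Nat.sub_add_cancel h] at hshift
  rw [hshift, hermiteTail]
  simp only [hermiteReal_zero, eval_one, mul_one]

theorem sum_Ico_iterate_derivative_hermiteReal (c v : ℝ) (f : ℕ → ℝ) {n s : ℕ}
    (hs : s ≤ n) :
    ∑ j ∈ Ico (n - s) n, 1 / (c * j !) * (derivative^[n - s] (hermiteReal j)).eval v * f j =
      ∑ k ∈ range s, (hermiteReal k).eval v / (c * k !) * f (n - s + k) := by
  rw [sum_Ico_eq_sum_range, Nat.sub_sub_self hs]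
  refine sum_congr rfl fun k _ => ?_
  have h := eval_iterate_derivative_hermiteReal_div_factorial (Nat.le_add_right (n - s) k) v
  rw [Nat.add_sub_cancel_left] at h
  linear_combination f (n - s + k) / c * h

theorem stmt18_general (H : ℕ → Polynomial ℝ)
    (hmonic : ∀ j, (H j).Monic) (hdeg : ∀ j, (H j).natDegree = j)
    (horth : ∀ i j : ℕ,
      (∫ x : ℝ, (H i).eval x * (H j).eval x * Real.exp (-x ^ 2 / 2))
        = if i = j then Real.sqrt (2 * Real.pi) * (Nat.factorial i) else 0)
    (n r s : ℕ) (hr' : r ≤ n - 1) (hs' : s ≤ n)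
    (u v : ℝ) :
    (∑ j ∈ Finset.Ico (n - s) n,
      (1 / (Real.sqrt (2 * Real.pi) * (Nat.factorial j))) *
        (derivative^[n - s] (H j)).eval v *
        ∫ x in Set.Ioi u,
          ((x - u) ^ (n - r - 1) / (Nat.factorial (n - r - 1))) * (H j).eval x *
            Real.exp (-x ^ 2 / 2))
    = (∑ j ∈ Finset.Icc (-(min r s : ℤ)) (-1 : ℤ),
        (1 / (Real.sqrt (2 * Real.pi) * (Nat.factorial (j + (s : ℤ)).toNat))) *
          (H ((j + (r : ℤ)).toNat)).eval u * (H ((j + (s : ℤ)).toNat)).eval v *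
          Real.exp (-u ^ 2 / 2))
      + (if r < s then
          ∑ j ∈ Finset.Icc (-(s : ℤ)) (-(r : ℤ) - 1),
            ((H ((j + (s : ℤ)).toNat)).eval v /
                (Real.sqrt (2 * Real.pi) * (Nat.factorial (j + (s : ℤ)).toNat))) *
              ∫ x in Set.Ioi u,
                ((x - u) ^ ((-j - (r : ℤ) - 1).toNat) /
                    (Nat.factorial ((-j - (r : ℤ) - 1).toNat))) * Real.exp (-x ^ 2 / 2)
        else 0) := by
  obtain rfl : H = hermiteReal := funext <| eq_hermiteReal_of_orthogonal H hmonic hdeg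
    fun i j hij => (horth i j).trans (if_neg hij)
  calc _ = ∑ k ∈ range s, (hermiteReal k).eval v / (√(2 * π) * k !) *
          hermiteTail u (n - r - 1) (n - s + k) :=
        sum_Ico_iterate_derivative_hermiteReal _ _ (hermiteTail u (n - r - 1)) hs'
    _ = _ := by
      rw [← sum_range_add_sum_Ico _ (Nat.sub_le s r), add_comm]
      congr 1
      · rw [← Nat.cast_min, show (-1 : ℤ) = -((0 : ℕ) : ℤ) - 1 by norm_num,
          sum_Icc_neg_eq_sum_Ico _ 0 (min_le_right r s),
          show s - min r s = s - r by omega, Nat.sub_zero]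
        refine sum_congr rfl fun k hk => ?_
        rw [mem_Ico] at hk
        rw [hermiteTail_of_lt (by omega), show ((k : ℤ) - s + s).toNat = k by omega,
          show ((k : ℤ) - s + r).toNat = n - s + k - (n - r - 1) - 1 by omega]
        ring
      · split_ifs with hrs
        · rw [sum_Icc_neg_eq_sum_Ico _ r le_rfl, Nat.sub_self, ← range_eq_Ico]
          refine sum_congr rfl fun k hk => ?_
          rw [mem_range] at hk
          rw [hermiteTail_of_le (by omega), show ((k : ℤ) - s + s).toNat = k by omega,
            show (-((k : ℤ) - s) - r - 1).toNat = n - r - 1 - (n - s + k) by omega]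
        · rw [Nat.sub_eq_zero_of_le (not_lt.mp hrs), sum_range_zero]

theorem stmt18 (H : ℕ → Polynomial ℝ)
    (hmonic : ∀ j, (H j).Monic) (hdeg : ∀ j, (H j).natDegree = j)
    (horth : ∀ i j : ℕ,
      (∫ x : ℝ, (H i).eval x * (H j).eval x * Real.exp (-x ^ 2 / 2))
        = if i = j then Real.sqrt (2 * Real.pi) * (Nat.factorial i) else 0)
    (n r s : ℕ) (hn : 1 ≤ n) (hr : 1 ≤ r) (hr' : r ≤ n - 1) (hs : 1 ≤ s) (hs' : s ≤ n)
    (u v : ℝ) :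
    (∑ j ∈ Finset.Ico (n - s) n,
      (1 / (Real.sqrt (2 * Real.pi) * (Nat.factorial j))) *
        (derivative^[n - s] (H j)).eval v *
        ∫ x in Set.Ioi u,
          ((x - u) ^ (n - r - 1) / (Nat.factorial (n - r - 1))) * (H j).eval x *
            Real.exp (-x ^ 2 / 2))
    = (∑ j ∈ Finset.Icc (-(min r s : ℤ)) (-1 : ℤ),
        (1 / (Real.sqrt (2 * Real.pi) * (Nat.factorial (j + (s : ℤ)).toNat))) *
          (H ((j + (r : ℤ)).toNat)).eval u * (H ((j + (s : ℤ)).toNat)).eval v *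
          Real.exp (-u ^ 2 / 2))
      + (if r < s then
          ∑ j ∈ Finset.Icc (-(s : ℤ)) (-(r : ℤ) - 1),
            ((H ((j + (s : ℤ)).toNat)).eval v /
                (Real.sqrt (2 * Real.pi) * (Nat.factorial (j + (s : ℤ)).toNat))) *
              ∫ x in Set.Ioi u,
                ((x - u) ^ ((-j - (r : ℤ) - 1).toNat) /
                    (Nat.factorial ((-j - (r : ℤ) - 1).toNat))) * Real.exp (-x ^ 2 / 2)
        else 0) :=
  stmt18_general H hmonic hdeg horth n r s hr' hs' u v
end
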